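/- arXiv:1509.09195 — 3 statements merged into one kernel-verified Lean document; each statement's English description precedes it below -/
import Mathlib

section
/- Let G be a square-free graph, let K be a clique in G (possibly empty), and let X1, X2, ..., Xk be pairwise disjoint subsets of V(G), each disjoint from K, such that Xi is complete to Xj for all i≠j; let X be the union of the Xi. Suppose that for every vertex v of K there is an index i such that v is complete to X∖Xi. Then there is an index i such that (K∪X)∖Xi is a clique in G. -/
open SimpleGraph

namespace Paper

variable {V : Type*} {α : Type*}

/-- `S` is complete to `T`: every vertex of `S` is adjacent to every vertex of `T`. -/
def CompleteTo (G : SimpleGraph V) (S T : Set V) : Prop :=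
  ∀ ⦃s⦄, s ∈ S → ∀ ⦃t⦄, t ∈ T → G.Adj s t

/-- `S` is anticomplete to `T`: there are no edges between `S` and `T`. -/
def AnticompleteTo (G : SimpleGraph V) (S T : Set V) : Prop :=
  ∀ ⦃s⦄, s ∈ S → ∀ ⦃t⦄, t ∈ T → ¬ G.Adj s t

/-- A vertex `v` is complete to a set `T`. -/
def VertexCompleteTo (G : SimpleGraph V) (v : V) (T : Set V) : Prop :=
  ∀ ⦃t⦄, t ∈ T → G.Adj v t

/-- `G` has a hole (induced cycle) of length `n`. -/
def HasHole (G : SimpleGraph V) (n : ℕ) : Prop :=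
  Nonempty (cycleGraph n ↪g G)

/-- `G` has no hole of odd length. -/
def NoOddHole (G : SimpleGraph V) : Prop :=
  ∀ n, 5 ≤ n → Odd n → ¬ HasHole G n

/-- `G` is Berge: no odd hole, no odd antihole. -/
def IsBerge (G : SimpleGraph V) : Prop :=
  NoOddHole G ∧ NoOddHole Gᶜ

/-- `G` is square-free: no induced 4-cycle. -/
def SquareFree (G : SimpleGraph V) : Prop := ¬ HasHole G 4

/-- The list `p` of vertices is a chordless (induced) path of `G`. -/
def IsChordlessPath (G : SimpleGraph V) (p : List V) : Prop :=
  p.Chain' G.Adj ∧ p.Nodup ∧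
    ∀ i j : Fin p.length, (i : ℕ) + 2 ≤ (j : ℕ) → ¬ G.Adj (p.get i) (p.get j)

/-- The interior vertices of a path given as a list. -/
def interior {β : Type*} (p : List β) : List β := p.tail.dropLast

/-- A triad: a set of three pairwise non-adjacent vertices. -/
def IsTriad (G : SimpleGraph V) (t : Set V) : Prop :=
  ∃ a b c : V, a ≠ b ∧ a ≠ c ∧ b ≠ c ∧
    ¬ G.Adj a b ∧ ¬ G.Adj a c ∧ ¬ G.Adj b c ∧ t = {a, b, c}

/-- The graph obtained from `G` by deleting all edges between `A` and `B`. -/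
def removeBetween (G : SimpleGraph V) (A B : Set V) : SimpleGraph V :=
  G.deleteEdges {e | ∃ x ∈ A, ∃ y ∈ B, e = s(x, y)}

/-- Condition (iii) of a good partition. -/
def Cond3 (G : SimpleGraph V) (K1 K3 L : Set V) : Prop :=
  ∀ (p : List V) (x y : V), IsChordlessPath (removeBetween G K1 K3) p →
    p.head? = some x → p.getLast? = some y → x ∈ K1 → y ∈ K3 →
    (∀ v ∈ interior p, v ∈ L) →
    ∃ v ∈ p, v ∈ L ∧ VertexCompleteTo G v K1

/-- A good partition of `G`. -/
structure IsGoodPartition (G : SimpleGraph V) (K1 K2 K3 L R : Set V) : Prop where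
  cover : K1 ∪ K2 ∪ K3 ∪ L ∪ R = Set.univ
  pdisj : ∀ i j : Fin 5, i ≠ j → Disjoint (![K1, K2, K3, L, R] i) (![K1, K2, K3, L, R] j)
  Lne : L.Nonempty
  Rne : R.Nonempty
  LR_anti : AnticompleteTo G L R
  clique12 : G.IsClique (K1 ∪ K2)
  clique23 : G.IsClique (K2 ∪ K3)
  cond3 : Cond3 G K1 K3 L
  cond4 : AnticompleteTo G K1 K3 ∨
      ∀ v ∈ L, ¬ ((∃ k ∈ K1, G.Adj v k) ∧ (∃ k ∈ K3, G.Adj v k))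
  cond5 : ∃ x ∈ L, ∃ y ∈ R, ∃ t : Set V, IsTriad G t ∧ x ∈ t ∧ y ∈ t

def HasGoodPartition (G : SimpleGraph V) : Prop :=
  ∃ K1 K2 K3 L R : Set V, IsGoodPartition G K1 K2 K3 L R

/-- An induced prism in `G`, with triangle vertices `a i`, `b i` joined by
the chordless paths `P i`. -/
structure IsPrism (G : SimpleGraph V) (a b : Fin 3 → V) (P : Fin 3 → List V) : Prop where
  chordless : ∀ i, IsChordlessPath G (P i)
  two_le : ∀ i, 2 ≤ (P i).length
  head : ∀ i, (P i).head? = some (a i)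
  last : ∀ i, (P i).getLast? = some (b i)
  disj : ∀ i j, i ≠ j → ∀ u ∈ P i, u ∉ P j
  edge_iff : ∀ i j, i ≠ j → ∀ u ∈ P i, ∀ v ∈ P j,
    (G.Adj u v ↔ (u = a i ∧ v = a j) ∨ (u = b i ∧ v = b j))

def ContainsPrism (G : SimpleGraph V) : Prop :=
  ∃ a b P, IsPrism G a b P

def ContainsEvenPrism (G : SimpleGraph V) : Prop :=
  ∃ a b P, IsPrism G a b P ∧ ∀ i : Fin 3, Even ((P i).length - 1)

def ContainsOddPrism (G : SimpleGraph V) : Prop :=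
  ∃ a b P, IsPrism G a b P ∧ ∀ i : Fin 3, Odd ((P i).length - 1)

/-- A rung: a chordless path from `A` to `B` with interior in `C`. -/
def IsRung (G : SimpleGraph V) (A B C : Set V) (p : List V) : Prop :=
  IsChordlessPath G p ∧
    (∃ x, p.head? = some x ∧ x ∈ A) ∧
    (∃ y, p.getLast? = some y ∧ y ∈ B) ∧
    ∀ v ∈ interior p, v ∈ C

/-- A hyperprism induced in `G`, with nine (pairwise disjoint) pieces `A i`, `C i`, `B i`. -/
structure IsHyperprism (G : SimpleGraph V) (A C B : Fin 3 → Set V) : Prop where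
  A_ne : ∀ i, (A i).Nonempty
  B_ne : ∀ i, (B i).Nonempty
  pdisj : ∀ p q : Fin 3 × Fin 3, p ≠ q →
    Disjoint (![A, C, B] p.1 p.2) (![A, C, B] q.1 q.2)
  cross : ∀ i j, i ≠ j → ∀ u ∈ A i ∪ C i ∪ B i, ∀ v ∈ A j ∪ C j ∪ B j,
    (G.Adj u v ↔ (u ∈ A i ∧ v ∈ A j) ∨ (u ∈ B i ∧ v ∈ B j))
  rung_cover : ∀ i, ∀ v ∈ A i ∪ C i ∪ B i,
    ∃ p, IsRung G (A i) (B i) (C i) p ∧ v ∈ p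

/-- The vertex set of a hyperprism. -/
def hypVerts (A C B : Fin 3 → Set V) : Set V := ⋃ i, (A i ∪ C i ∪ B i)

def EvenHyperprism (G : SimpleGraph V) (A C B : Fin 3 → Set V) : Prop :=
  ∀ i p, IsRung G (A i) (B i) (C i) p → Even (p.length - 1)

def OddHyperprism (G : SimpleGraph V) (A C B : Fin 3 → Set V) : Prop :=
  ∀ i p, IsRung G (A i) (B i) (C i) p → Odd (p.length - 1)

/-- A major neighbor of a hyperprism. -/
def IsMajorNbrHyp (G : SimpleGraph V) (A C B : Fin 3 → Set V) (x : V) : Prop :=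
  x ∉ hypVerts A C B ∧
  ∃ (p : Fin 3 → List V) (a b : Fin 3 → V),
    (∀ i, IsRung G (A i) (B i) (C i) (p i) ∧
      (p i).head? = some (a i) ∧ (p i).getLast? = some (b i)) ∧
    (∃ i j, i ≠ j ∧ G.Adj x (a i) ∧ G.Adj x (a j)) ∧
    (∃ i j, i ≠ j ∧ G.Adj x (b i) ∧ G.Adj x (b j))

/-- A local subset of a hyperprism. -/
def HypLocal (A C B : Fin 3 → Set V) (X : Set V) : Prop :=
  (X ⊆ ⋃ i, A i) ∨ (X ⊆ ⋃ i, B i) ∨ ∃ i, X ⊆ A i ∪ C i ∪ B i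

/-- `x` and `y` are consecutive (in this order) in the list `l`. -/
def consecutive {β : Type*} (l : List β) (x y : β) : Prop :=
  ∃ i : ℕ, l[i]? = some x ∧ l[i + 1]? = some y

/-- `H` is a subdivision of `J`, witnessed by the injection `g` of branch vertices and,
for each edge `uv` of `J`, the path `P u v` of `H` replacing that edge. -/
structure IsSubdivisionVia {α' β : Type*} (J : SimpleGraph α') (H : SimpleGraph β)
    (g : α' ↪ β) (P : α' → α' → List β) : Prop where
  chain : ∀ u v, J.Adj u v → (P u v).Chain' H.Adj
  nodup : ∀ u v, J.Adj u v → (P u v).Nodup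
  rev : ∀ u v, J.Adj u v → P v u = (P u v).reverse
  head : ∀ u v, J.Adj u v → (P u v).head? = some (g u)
  last : ∀ u v, J.Adj u v → (P u v).getLast? = some (g v)
  branch : ∀ u v, J.Adj u v → ∀ w : α', g w ∈ P u v → w = u ∨ w = v
  int_disj : ∀ u v w x, J.Adj u v → J.Adj w x → s(u, v) ≠ s(w, x) →
    ∀ z ∈ interior (P u v), z ∉ P w x
  cover : ∀ z : β, (∃ w, g w = z) ∨ ∃ u v, J.Adj u v ∧ z ∈ interior (P u v)
  edge_iff : ∀ a b : β, H.Adj a b ↔ ∃ u v, J.Adj u v ∧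
    (consecutive (P u v) a b ∨ consecutive (P u v) b a)

def IsSubdivision {α' β : Type*} (J : SimpleGraph α') (H : SimpleGraph β) : Prop :=
  ∃ (g : α' ↪ β) (P : α' → α' → List β), IsSubdivisionVia J H g P

/-- The complete graph `K₄`. -/
def K4g : SimpleGraph (Fin 4) := completeGraph (Fin 4)

/-- `G` contains (as an induced subgraph) the line graph of a bipartite subdivision of `J`. -/
def ContainsLineGraphOfBipSubdiv {α' : Type*} (J : SimpleGraph α') (G : SimpleGraph V) : Prop :=
  ∃ (β : Type) (H : SimpleGraph β), IsSubdivision J H ∧ H.Colorable 2 ∧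
    Nonempty (H.lineGraph ↪g G)

/-- The set `W` induces in `G` the line graph of a bipartite subdivision of `J`. -/
def InducesLineGraphOfBipSubdiv {α' : Type*} (J : SimpleGraph α') (G : SimpleGraph V)
    (W : Set V) : Prop :=
  ∃ (β : Type) (H : SimpleGraph β), IsSubdivision J H ∧ H.Colorable 2 ∧
    Nonempty (H.lineGraph ≃g G.induce W)

/-- A (finite) graph is 3-connected. -/
def ThreeConnected {α' : Type*} [Fintype α'] (J : SimpleGraph α') : Prop :=
  4 ≤ Fintype.card α' ∧ ∀ s : Set α', Nat.card s ≤ 2 → (J.induce sᶜ).Connected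

/-- `J'` is an enlargement of `J`. -/
def IsEnlargement {α' α'' : Type*} [Fintype α''] (J : SimpleGraph α')
    (J' : SimpleGraph α'') : Prop :=
  ThreeConnected J' ∧ ∃ s : Set α'', s ≠ Set.univ ∧
    ∃ (β : Type) (H : SimpleGraph β), IsSubdivision J H ∧ Nonempty (H ≃g J'.induce s)

/-- The appearance of `J` given by the subdivision data `(H, g)` is degenerate. -/
def IsDegenerateVia {α' β : Type*} (J : SimpleGraph α') (H : SimpleGraph β)
    (g : α' ↪ β) : Prop :=
  (Nonempty (J ≃g completeGraph (Fin 4)) ∧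
    ∃ a b c d : α', [a, b, c, d].Nodup ∧
      H.Adj (g a) (g b) ∧ H.Adj (g b) (g c) ∧ H.Adj (g c) (g d) ∧ H.Adj (g d) (g a)) ∨
  (Nonempty (J ≃g completeBipartiteGraph (Fin 3) (Fin 3)) ∧ Nonempty (H ≃g J))

/-- `J` has a non-degenerate appearance in `G`. -/
def HasNondegenerateAppearance {α' : Type*} (J : SimpleGraph α') (G : SimpleGraph V) : Prop :=
  ∃ (β : Type) (H : SimpleGraph β) (g : α' ↪ β) (P : α' → α' → List β),
    IsSubdivisionVia J H g P ∧ H.Colorable 2 ∧ ¬ IsDegenerateVia J H g ∧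
    Nonempty (H.lineGraph ↪g G)

/-- A `uv`-rung of a strip system. -/
def IsStripRung (G : SimpleGraph V) (S : α → α → Set V) (N : α → Set V)
    (u v : α) (p : List V) : Prop :=
  IsChordlessPath G p ∧ (∀ z ∈ p, z ∈ S u v) ∧
    (∃ a, p.head? = some a ∧ a ∈ N u ∧ ∀ z ∈ p, z ∈ N u → z = a) ∧
    (∃ b, p.getLast? = some b ∧ b ∈ N v ∧ ∀ z ∈ p, z ∈ N v → z = b)

/-- The vertex set `V(S,N)` of a strip system. -/
def stripVerts (J : SimpleGraph α) (S : α → α → Set V) : Set V :=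
  {z | ∃ u v, J.Adj u v ∧ z ∈ S u v}

/-- A `J`-strip system `(S,N)` in `G`. -/
structure IsStripSystem {α' : Type*} (J : SimpleGraph α') (G : SimpleGraph V)
    (S : α' → α' → Set V) (N : α' → Set V) : Prop where
  S_symm : ∀ u v, S u v = S v u
  S_empty : ∀ u v, ¬ J.Adj u v → S u v = ∅
  S_disj : ∀ u v w x, J.Adj u v → J.Adj w x → s(u, v) ≠ s(w, x) →
    Disjoint (S u v) (S w x)
  N_sub : ∀ u, N u ⊆ {z | ∃ v, J.Adj u v ∧ z ∈ S u v}
  rung_cover : ∀ u v, J.Adj u v → ∀ z ∈ S u v,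
    ∃ p, IsStripRung G S N u v p ∧ z ∈ p
  far_anti : ∀ u v w x, J.Adj u v → J.Adj w x → u ≠ w → u ≠ x → v ≠ w → v ≠ x →
    AnticompleteTo G (S u v) (S w x)
  fork : ∀ u v w, J.Adj u v → J.Adj u w → v ≠ w →
    ∀ a ∈ S u v, ∀ b ∈ S u w, (G.Adj a b ↔ a ∈ N u ∧ b ∈ N u)
  parity : ∃ R : Sym2 α' → List V,
    (∀ u v, J.Adj u v →
      IsStripRung G S N u v (R s(u, v)) ∨ IsStripRung G S N v u (R s(u, v))) ∧
    ∀ (u : α') (c : J.Walk u u), c.IsCycle →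
      ((c.edges.map fun e => (R e).length - 1).sum % 2 = c.length % 2)

/-- `X` saturates, where `Nuv u v` plays the role of `N_uv`. -/
def SaturatesOn (J : SimpleGraph α) (Nuv : α → α → Set V) (X : Set V) : Prop :=
  ∀ u v w, J.Adj u v → J.Adj u w → ¬ (Nuv u v ⊆ X) → ¬ (Nuv u w ⊆ X) → v = w

/-- `x` is major with respect to the strip system `(S,N)`. -/
def IsMajorStrip (J : SimpleGraph α) (G : SimpleGraph V)
    (S : α → α → Set V) (N : α → Set V) (x : V) : Prop :=
  x ∉ stripVerts J S ∧ SaturatesOn J (fun u v => S u v ∩ N u) (G.neighborSet x)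

/-- `R` is a choice of rungs of the strip system `(S,N)`. -/
def IsChoiceOfRungs (J : SimpleGraph α) (G : SimpleGraph V)
    (S : α → α → Set V) (N : α → Set V) (R : Sym2 α → List V) : Prop :=
  ∀ u v, J.Adj u v →
    IsStripRung G S N u v (R s(u, v)) ∨ IsStripRung G S N v u (R s(u, v))

/-- `x` is major with respect to the choice of rungs `R`. -/
def IsMajorOnChoice (J : SimpleGraph α) (G : SimpleGraph V)
    (S : α → α → Set V) (N : α → Set V) (R : Sym2 α → List V) (x : V) : Prop :=
  x ∉ stripVerts J S ∧
  SaturatesOn J (fun u v => {z | z ∈ R s(u, v)} ∩ N u) (G.neighborSet x)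

/-- A local subset of a strip system. -/
def StripLocal (J : SimpleGraph α) (S : α → α → Set V) (N : α → Set V)
    (X : Set V) : Prop :=
  (∃ u, X ⊆ N u) ∨ ∃ u v, J.Adj u v ∧ X ⊆ S u v

/-- Some choice of rungs of the `K₄`-strip system yields a degenerate appearance of `K₄`
(the four branch vertices form a square, i.e. some 4-cycle of rungs are all single vertices). -/
def ChoiceYieldsDegenerateK4 (J : SimpleGraph α) (G : SimpleGraph V)
    (S : α → α → Set V) (N : α → Set V) : Prop :=
  ∃ R, IsChoiceOfRungs J G S N R ∧ ∃ a b c d : α, [a, b, c, d].Nodup ∧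
    J.Adj a b ∧ J.Adj b c ∧ J.Adj c d ∧ J.Adj d a ∧
    (R s(a, b)).length = 1 ∧ (R s(b, c)).length = 1 ∧
    (R s(c, d)).length = 1 ∧ (R s(d, a)).length = 1

/-- The set `O_ij` for a `K₄`-strip system. -/
def OsetK4 (G : SimpleGraph V) (S : Fin 4 → Fin 4 → Set V) (N : Fin 4 → Set V)
    (i j : Fin 4) : Set V :=
  {x | x ∉ stripVerts K4g S ∧
    (∀ y ∈ (N i ∪ N j) \ S i j, G.Adj x y) ∧
    (∀ y ∈ stripVerts K4g S \ (N i ∪ N j ∪ S i j), ¬ G.Adj x y)}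

/-- A special `K₄`-strip system (vertices of `K₄` are `0,1,2,3`, standing for `1,2,3,4`). -/
structure IsSpecialK4StripSystem (G : SimpleGraph V)
    (S : Fin 4 → Fin 4 → Set V) (N : Fin 4 → Set V) : Prop where
  strip : IsStripSystem K4g G S N
  a13 : S 0 2 ⊆ N 0 ∧ S 0 2 ⊆ N 2
  a24 : S 1 3 ⊆ N 1 ∧ S 1 3 ⊆ N 3
  b12 : ∀ p, IsStripRung G S N 0 1 p → Even (p.length - 1) ∧ 3 ≤ p.length
  b34 : ∀ p, IsStripRung G S N 2 3 p → Even (p.length - 1) ∧ 3 ≤ p.length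
  b14 : ∀ p, IsStripRung G S N 0 3 p → Odd (p.length - 1) ∧ 4 ≤ p.length
  b23 : ∀ p, IsStripRung G S N 1 2 p → Odd (p.length - 1) ∧ 4 ≤ p.length
  c_ne12 : (OsetK4 G S N 0 1).Nonempty
  c_ne34 : (OsetK4 G S N 2 3).Nonempty
  c_comp : CompleteTo G (OsetK4 G S N 0 1) (OsetK4 G S N 2 3)
  majors : ∀ x ∉ stripVerts K4g S ∪ OsetK4 G S N 0 1 ∪ OsetK4 G S N 2 3,
      (∃ R, IsChoiceOfRungs K4g G S N R ∧ IsMajorOnChoice K4g G S N R x) →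
      IsMajorStrip K4g G S N x
  e_app : ¬ ∃ (α'' : Type) (_ : Fintype α'') (J' : SimpleGraph α'') (W : Set V),
      IsEnlargement K4g J' ∧ stripVerts K4g S ⊆ W ∧
      Disjoint W (OsetK4 G S N 0 1 ∪ OsetK4 G S N 2 3) ∧
      InducesLineGraphOfBipSubdiv J' G W
  e_max : ¬ ∃ (S' : Fin 4 → Fin 4 → Set V) (N' : Fin 4 → Set V),
      IsStripSystem K4g G S' N' ∧
      Disjoint (stripVerts K4g S') (OsetK4 G S N 0 1 ∪ OsetK4 G S N 2 3) ∧
      stripVerts K4g S ⊂ stripVerts K4g S'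

/-- An almost good partition: conditions (i), (ii) and (v) of a good partition. -/
structure IsAlmostGoodPartition (G : SimpleGraph V) (K1 K2 K3 L R : Set V) : Prop where
  cover : K1 ∪ K2 ∪ K3 ∪ L ∪ R = Set.univ
  pdisj : ∀ i j : Fin 5, i ≠ j → Disjoint (![K1, K2, K3, L, R] i) (![K1, K2, K3, L, R] j)
  Lne : L.Nonempty
  Rne : R.Nonempty
  LR_anti : AnticompleteTo G L R
  clique12 : G.IsClique (K1 ∪ K2)
  clique23 : G.IsClique (K2 ∪ K3)
  cond5 : ∃ x ∈ L, ∃ y ∈ R, ∃ t : Set V, IsTriad G t ∧ x ∈ t ∧ y ∈ t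

/-- An optimal good partition. -/
def IsOptimalGoodPartition (G : SimpleGraph V) (K1 K2 K3 L R : Set V) : Prop :=
  IsGoodPartition G K1 K2 K3 L R ∧
    ¬ ∃ K1' K2' K3' L' R' : Set V, IsGoodPartition G K1' K2' K3' L' R' ∧
      (K2 ⊂ K2' ∨ (K2 = K2' ∧ K3 ⊂ K3'))

/-- `c` is a maximal vertex of `K`: its neighborhood in `other` contains that of
every other vertex of `K`. -/
def IsMaxVert (G : SimpleGraph V) (other K : Set V) (c : V) : Prop :=
  c ∈ K ∧ ∀ d ∈ K, ∀ z ∈ other, G.Adj d z → G.Adj c z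

/-- A frame in `G`. -/
structure IsFrame (G : SimpleGraph V) (Q1 Q3 : Set V) (x y : V) (C1 C3 : Set V) : Prop where
  xy_ne : x ≠ y
  xy_triad : ∃ t : Set V, IsTriad G t ∧ x ∈ t ∧ y ∈ t
  Q1_cl : G.IsClique Q1
  Q1_x : x ∉ Q1
  Q1_y : y ∉ Q1
  Q1_max : ∀ Q : Set V, G.IsClique Q → x ∉ Q → y ∉ Q → Q1 ⊆ Q → Q = Q1
  Q3_cl : G.IsClique Q3
  Q3_x : x ∉ Q3
  Q3_y : y ∉ Q3
  Q3_max : ∀ Q : Set V, G.IsClique Q → x ∉ Q → y ∉ Q → Q3 ⊆ Q → Q = Q3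
  C1_sub : C1 ⊆ Q1 \ Q3
  C3_sub : C3 ⊆ Q3 \ Q1
  C1_small : C1.Subsingleton
  C3_small : C3.Subsingleton

/-- A frame for a good partition. -/
structure IsFrameFor (G : SimpleGraph V) (Q1 Q3 : Set V) (x y : V) (C1 C3 : Set V)
    (K1 K2 K3 L R : Set V) : Prop where
  frame : IsFrame G Q1 Q3 x y C1 C3
  K1_sub : K1 ⊆ Q1 \ Q3
  K2_eq : K2 = Q1 ∩ Q3
  K3_sub : K3 ⊆ Q3 \ Q1
  xL : x ∈ L
  yR : y ∈ R
  C1_spec : (K1 = ∅ → C1 = ∅) ∧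
    (K1 ≠ ∅ → ∃ c1, C1 = {c1} ∧ IsMaxVert G (Q3 \ Q1) K1 c1)
  C3_spec : (K3 = ∅ → C3 = ∅) ∧
    (K3 ≠ ∅ → ∃ c3, C3 = {c3} ∧ IsMaxVert G (Q1 \ Q3) K3 c3)

/-!
Call a part `X j` bad if `K ∪ X j` is not a clique. A vertex of `K` with a non-neighbour in
`X j` must be complete to all the other parts, so non-edges `u w` of `K ∪ X j` and `u' w'` of
`K ∪ X l`, with `u ∈ X j` and `u' ∈ X l`, would span the square `u u' w w'`. Hence at most one
part is bad, and deleting it (or any part, if none is bad) leaves a clique.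
-/

lemma hasHole_four_of_cycle {G : SimpleGraph V} {a b c d : V}
    (hab : G.Adj a b) (hbc : G.Adj b c) (hcd : G.Adj c d) (hda : G.Adj d a)
    (hac : ¬ G.Adj a c) (hbd : ¬ G.Adj b d) (hac_ne : a ≠ c) (hbd_ne : b ≠ d) :
    HasHole G 4 := by
  refine ⟨⟨⟨![a, b, c, d], ?_⟩, ?_⟩⟩
  · intro i j hij
    fin_cases i <;> fin_cases j <;> simp_all [G.ne_of_adj]
  · intro i j
    change G.Adj (![a, b, c, d] i) (![a, b, c, d] j) ↔ _
    fin_cases i <;> fin_cases j <;>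
      simp +decide [hab, hbc, hcd, hda, hac, hbd, hab.symm, hbc.symm, hcd.symm, hda.symm,
        mt G.adj_symm hac, mt G.adj_symm hbd]

lemma exists_not_adj_of_not_isClique_union {G : SimpleGraph V} {K S : Set V}
    (hK : G.IsClique K) (h : ¬ G.IsClique (K ∪ S)) :
    ∃ u ∈ S, ∃ w ∈ K ∪ S, u ≠ w ∧ ¬ G.Adj u w := by
  obtain ⟨a, ha, b, hb, hab, hnadj⟩ : ∃ a ∈ K ∪ S, ∃ b ∈ K ∪ S, a ≠ b ∧ ¬ G.Adj a b := by
    simpa [SimpleGraph.IsClique, Set.Pairwise] using h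
  rcases ha with haK | haS
  · rcases hb with hbK | hbS
    · exact absurd (hK haK hbK hab) hnadj
    · exact ⟨b, hbS, a, Or.inl haK, hab.symm, mt G.adj_symm hnadj⟩
  · exact ⟨a, haS, b, hb, hab, hnadj⟩

section CliqueLemma

variable {ι : Type*} {G : SimpleGraph V} {K : Set V} {X : ι → Set V}

lemma mem_iUnion_sdiff_of_ne (hXdisj : ∀ i j, i ≠ j → Disjoint (X i) (X j)) {i j : ι}
    (hij : i ≠ j) {x : V} (hx : x ∈ X i) : x ∈ (⋃ l, X l) \ X j :=
  ⟨Set.mem_iUnion_of_mem i hx, Set.disjoint_left.1 (hXdisj i j hij) hx⟩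

lemma adj_of_not_adj_of_mem_union
    (hXdisj : ∀ i j, i ≠ j → Disjoint (X i) (X j))
    (hXcomp : ∀ i j, i ≠ j → CompleteTo G (X i) (X j))
    (hvK : ∀ v ∈ K, ∃ i, VertexCompleteTo G v ((⋃ j, X j) \ X i))
    {j l : ι} (hjl : j ≠ l) {u w y : V} (hu : u ∈ X j) (hw : w ∈ K ∪ X j)
    (huw : ¬ G.Adj u w) (hy : y ∈ X l) : G.Adj w y := by
  rcases hw with hwK | hwX
  · obtain ⟨i, hi⟩ := hvK w hwK
    obtain rfl : i = j := by
      by_contra hij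
      exact huw (hi (mem_iUnion_sdiff_of_ne hXdisj (Ne.symm hij) hu)).symm
    exact hi (mem_iUnion_sdiff_of_ne hXdisj hjl.symm hy)
  · exact hXcomp j l hjl hwX hy

lemma subsingleton_setOf_not_isClique_union (hsf : SquareFree G) (hK : G.IsClique K)
    (hXdisj : ∀ i j, i ≠ j → Disjoint (X i) (X j))
    (hXcomp : ∀ i j, i ≠ j → CompleteTo G (X i) (X j))
    (hvK : ∀ v ∈ K, ∃ i, VertexCompleteTo G v ((⋃ j, X j) \ X i)) :
    {j | ¬ G.IsClique (K ∪ X j)}.Subsingleton := by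
  intro j hj l hl
  by_contra hjl
  obtain ⟨u, hu, w, hw, huw, hnuw⟩ := exists_not_adj_of_not_isClique_union hK hj
  obtain ⟨u', hu', w', hw', huw', hnuw'⟩ := exists_not_adj_of_not_isClique_union hK hl
  have side : ∀ {j l : ι}, j ≠ l → ∀ {u w y : V}, u ∈ X j → w ∈ K ∪ X j → ¬ G.Adj u w →
      y ∈ X l → G.Adj w y :=
    adj_of_not_adj_of_mem_union hXdisj hXcomp hvK
  have hww' : G.Adj w w' := by
    rcases hw' with hw'K | hw'X
    · rcases hw with hwK | hwX
      · obtain rfl | hne := eq_or_ne w w'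
        · exact absurd (side hjl hu (Or.inl hwK) hnuw hu').symm hnuw'
        · exact hK hwK hw'K hne
      · exact (side (Ne.symm hjl) hu' (Or.inl hw'K) hnuw' hwX).symm
    · exact side hjl hu hw hnuw hw'X
  exact hsf <| hasHole_four_of_cycle (hXcomp j l hjl hu hu') (side hjl hu hw hnuw hu').symm
    hww' (side (Ne.symm hjl) hu' hw' hnuw' hu) hnuw hnuw' huw huw'

lemma isClique_union_iUnion_sdiff (hK : G.IsClique K)
    (hXcomp : ∀ i j, i ≠ j → CompleteTo G (X i) (X j)) {i : ι}
    (hgood : ∀ j, j ≠ i → G.IsClique (K ∪ X j)) :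
    G.IsClique ((K ∪ ⋃ j, X j) \ X i) := by
  rintro a ⟨ha, hai⟩ b ⟨hb, hbi⟩ hab
  simp only [Set.mem_union, Set.mem_iUnion] at ha hb
  rcases ha with haK | ⟨j, haX⟩ <;> rcases hb with hbK | ⟨l, hbX⟩
  · exact hK haK hbK hab
  · exact hgood l (by rintro rfl; exact hbi hbX) (Or.inl haK) (Or.inr hbX) hab
  · exact hgood j (by rintro rfl; exact hai haX) (Or.inr haX) (Or.inl hbK) hab
  · obtain rfl | hjl := eq_or_ne j l
    · exact hgood j (by rintro rfl; exact hai haX) (Or.inr haX) (Or.inr hbX) hab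
    · exact hXcomp j l hjl haX hbX

end CliqueLemma

theorem squareFree_clique_lemma_general
    {V : Type*} (G : SimpleGraph V) (hsf : SquareFree G)
    (K : Set V) (hK : G.IsClique K)
    (k : ℕ) (hk : 0 < k) (X : Fin k → Set V)
    (hXdisj : ∀ i j, i ≠ j → Disjoint (X i) (X j))
    (hXcomp : ∀ i j, i ≠ j → CompleteTo G (X i) (X j))
    (hvK : ∀ v ∈ K, ∃ i, VertexCompleteTo G v ((⋃ j, X j) \ X i)) :
    ∃ i, G.IsClique ((K ∪ ⋃ j, X j) \ X i) := by
  obtain ⟨i, hi⟩ : ∃ i, ∀ j, ¬ G.IsClique (K ∪ X j) → j = i := by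
    rcases (subsingleton_setOf_not_isClique_union hsf hK hXdisj hXcomp hvK).eq_empty_or_singleton
      with hbad | ⟨i, hbad⟩
    · exact ⟨⟨0, hk⟩, fun j hj => (hbad.subset hj).elim⟩
    · exact ⟨i, fun j hj => hbad.subset hj⟩
  exact ⟨i, isClique_union_iUnion_sdiff hK hXcomp fun j hji => not_not.1 (mt (hi j) hji)⟩

/-- the clique lemma for square-free graphs. -/
theorem squareFree_clique_lemma
    {V : Type*} (G : SimpleGraph V) (hsf : SquareFree G)
    (K : Set V) (hK : G.IsClique K)
    (k : ℕ) (hk : 0 < k) (X : Fin k → Set V)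
    (hXdisj : ∀ i j, i ≠ j → Disjoint (X i) (X j))
    (hXK : ∀ i, Disjoint (X i) K)
    (hXcomp : ∀ i j, i ≠ j → CompleteTo G (X i) (X j))
    (hvK : ∀ v ∈ K, ∃ i, VertexCompleteTo G v ((⋃ j, X j) \ X i)) :
    ∃ i, G.IsClique ((K ∪ ⋃ j, X j) \ X i) :=
  squareFree_clique_lemma_general G hsf K hK k hk X hXdisj hXcomp hvK

end Paper
end

section
/- Let G be a square-free Berge graph and (S,N) a special K4-strip system in G with V(K4)={1,2,3,4}. Let M be the set of vertices major with respect to (S,N). Then: (1) O_12∪M and O_34∪M are cliques of G; and (2) there exists a neighbor k of 1 in K4 such that O_12∪M∪(N_1∖N_1k) is a clique, and there exists a neighbor ℓ of 2 in K4 such that O_12∪M∪(N_2∖N_2ℓ) is a clique. -/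
open SimpleGraph

namespace Paper

variable {V : Type*} {α : Type*}

/-!
In a square-free graph two distinct non-adjacent vertices cannot have two distinct non-adjacent
common neighbours; everything follows from this square argument. In a special `K₄`-strip system
the strips `12, 23, 34, 41` have long rungs, so none of their vertices lies in both of their ends,
and many pairs of ends `N_uv`, `N_wx` are anticomplete. A vertex of `O_12` is complete to every end
at `1` and `2` outside `S_12`, and a major vertex misses at most one end at each vertex of `K₄`; by
pigeonhole two vertices of `O_12 ∪ M` (or of `O_34 ∪ M`) are complete to a common pair of
anticomplete ends, hence adjacent.

For the second part, at the vertex `1` the set `N_13 = S_13` is a clique complete to `O_12 ∪ M` and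
to the other ends at `1`: its vertices, and a major vertex missing one of them, are complete to the
anticomplete ends `N_12` and `N_34`. The square argument applied to the clique `O_12 ∪ M` and the
complete pair `N_12`, `N_14` shows that one of these two ends is a clique complete to `O_12 ∪ M`.
-/

section Graph

variable {G : SimpleGraph V} {A B X : Set V}

theorem SquareFree.adj_of_common_nonadj_neighbors (hsf : SquareFree G) {x y p q : V}
    (hxy : x ≠ y) (hpq : p ≠ q) (hnpq : ¬ G.Adj p q) (hxp : G.Adj x p) (hxq : G.Adj x q)
    (hyp : G.Adj y p) (hyq : G.Adj y q) : G.Adj x y := by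
  by_contra hnxy
  refine hsf ⟨{ toFun := ![x, p, y, q], inj' := ?_, map_rel_iff' := ?_ }⟩
  · intro a b hab
    fin_cases a <;> fin_cases b <;>
      simp_all [hxp.ne, hxq.ne, hyp.ne, hyq.ne, hxp.ne', hxq.ne', hyp.ne', hyq.ne']
  · intro a b
    change G.Adj (![x, p, y, q] a) (![x, p, y, q] b) ↔ _
    fin_cases a <;> fin_cases b <;> simp_all (config := {decide := true}) [G.adj_comm]

theorem CompleteTo.symm (h : CompleteTo G A B) : CompleteTo G B A :=
  fun _ hb _ ha => (h ha hb).symm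

theorem isClique_union_of_completeTo (hA : G.IsClique A) (hB : G.IsClique B)
    (hAB : CompleteTo G A B) : G.IsClique (A ∪ B) :=
  Set.pairwise_union.2 ⟨hA, hB, fun _ ha _ hb _ => ⟨hAB ha hb, (hAB ha hb).symm⟩⟩

theorem exists_not_adj_of_not_isClique (hA : ¬ G.IsClique A) :
    ∃ u ∈ A, ∃ u' ∈ A, u ≠ u' ∧ ¬ G.Adj u u' := by
  simpa [SimpleGraph.IsClique, Set.Pairwise] using hA

theorem isClique_union_of_subset {C D : Set V} (hXA : G.IsClique (X ∪ A)) (hC : G.IsClique C)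
    (hXC : CompleteTo G X C) (hAC : CompleteTo G A C) (hD : D ⊆ A ∪ C) :
    G.IsClique (X ∪ D) := by
  refine (isClique_union_of_completeTo hXA hC ?_).subset ?_
  · rintro x (hx | hx)
    exacts [hXC hx, hAC hx]
  · exact (Set.union_subset_union_right X hD).trans (Set.union_assoc X A C).symm.subset

namespace SquareFree

theorem isClique_of_not_isClique (hsf : SquareFree G) (hAB : CompleteTo G A B)
    (hA : ¬ G.IsClique A) : G.IsClique B := by
  obtain ⟨u, hu, u', hu', huu', hnadj⟩ := exists_not_adj_of_not_isClique hA
  intro w hw w' hw' hww'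
  exact hsf.adj_of_common_nonadj_neighbors hww' huu' hnadj (hAB hu hw).symm
    (hAB hu' hw).symm (hAB hu hw').symm (hAB hu' hw').symm

theorem completeTo_of_not_isClique (hsf : SquareFree G) (hAB : CompleteTo G A B)
    (hA : ¬ G.IsClique A) (hXB : Disjoint X B)
    (hcov : ∀ x ∈ X, VertexCompleteTo G x A ∨ VertexCompleteTo G x B) : CompleteTo G X B := by
  obtain ⟨u, hu, u', hu', huu', hnadj⟩ := exists_not_adj_of_not_isClique hA
  intro x hx w hw
  refine (hcov x hx).elim (fun hxA => ?_) (fun hxB => hxB hw)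
  exact hsf.adj_of_common_nonadj_neighbors (hXB.ne_of_mem hx hw) huu' hnadj (hxA hu)
    (hxA hu') (hAB hu hw).symm (hAB hu' hw).symm

theorem completeTo_or_completeTo (hsf : SquareFree G) (hX : G.IsClique X)
    (hAB : CompleteTo G A B) (hXA : Disjoint X A) (hXB : Disjoint X B)
    (hcov : ∀ x ∈ X, VertexCompleteTo G x A ∨ VertexCompleteTo G x B) :
    CompleteTo G X A ∨ CompleteTo G X B := by
  by_contra h
  simp only [not_or, CompleteTo, not_forall] at h
  obtain ⟨⟨z, hz, u, hu, hzu⟩, ⟨z', hz', w, hw, hz'w⟩⟩ := h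
  have hzB := (hcov z hz).resolve_left fun h => hzu (h hu)
  have hz'A := (hcov z' hz').resolve_right fun h => hz'w (h hw)
  have hzz' : z ≠ z' := by rintro rfl; exact hz'w (hzB hw)
  exact hz'w (hsf.adj_of_common_nonadj_neighbors (hXB.ne_of_mem hz' hw) (hXA.ne_of_mem hz hu)
    hzu (hX hz' hz hzz'.symm) (hz'A hu) (hzB hw).symm (hAB hu hw).symm)

theorem isClique_union_or (hsf : SquareFree G) (hX : G.IsClique X) (hAB : CompleteTo G A B)
    (hXA : Disjoint X A) (hXB : Disjoint X B)
    (hcov : ∀ x ∈ X, VertexCompleteTo G x A ∨ VertexCompleteTo G x B) :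
    G.IsClique (X ∪ A) ∨ G.IsClique (X ∪ B) := by
  by_cases hA : G.IsClique A
  · by_cases hB : G.IsClique B
    · exact (hsf.completeTo_or_completeTo hX hAB hXA hXB hcov).imp
        (isClique_union_of_completeTo hX hA) (isClique_union_of_completeTo hX hB)
    · exact .inl (isClique_union_of_completeTo hX hA
        (hsf.completeTo_of_not_isClique hAB.symm hB hXA fun x hx => (hcov x hx).symm))
  · exact .inr (isClique_union_of_completeTo hX (hsf.isClique_of_not_isClique hAB hA)
      (hsf.completeTo_of_not_isClique hAB hA hXB hcov))

end SquareFree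

end Graph

namespace IsStripSystem

variable {J : SimpleGraph α} {G : SimpleGraph V} {S : α → α → Set V} {N : α → Set V}

theorem nonempty_end (hst : IsStripSystem J G S N) {u v : α} (huv : J.Adj u v) :
    (S u v ∩ N u).Nonempty := by
  obtain ⟨R, hR, -⟩ := hst.parity
  rcases hR u v huv with ⟨-, hR, ⟨a, ha, haN, -⟩, -⟩ | ⟨-, hR, -, ⟨b, hb, hbN, -⟩⟩
  · exact ⟨a, hR a (List.mem_of_mem_head? ha), haN⟩
  · exact ⟨b, hst.S_symm v u ▸ hR b (List.mem_of_mem_getLast? hb), hbN⟩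

theorem exists_mem_N_of_adj (hst : IsStripSystem J G S N) {u v w x : α} (huv : J.Adj u v)
    (hwx : J.Adj w x) (hne : s(u, v) ≠ s(w, x)) {p q : V} (hp : p ∈ S u v) (hq : q ∈ S w x)
    (hpq : G.Adj p q) : ∃ t, (t = u ∨ t = v) ∧ (t = w ∨ t = x) ∧ p ∈ N t ∧ q ∈ N t := by
  by_cases huw : u = w
  · subst huw
    have hvx : v ≠ x := by rintro rfl; exact hne rfl
    exact ⟨u, .inl rfl, .inl rfl, (hst.fork u v x huv hwx hvx p hp q hq).1 hpq⟩
  by_cases hux : u = x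
  · subst hux
    have hvw : v ≠ w := by rintro rfl; exact hne Sym2.eq_swap
    exact ⟨u, .inl rfl, .inr rfl,
      (hst.fork u v w huv hwx.symm hvw p hp q (hst.S_symm w u ▸ hq)).1 hpq⟩
  by_cases hvw : v = w
  · subst hvw
    exact ⟨v, .inr rfl, .inl rfl,
      (hst.fork v u x huv.symm hwx hux p (hst.S_symm u v ▸ hp) q hq).1 hpq⟩
  by_cases hvx : v = x
  · subst hvx
    exact ⟨v, .inr rfl, .inr rfl, (hst.fork v u w huv.symm hwx.symm huw p
      (hst.S_symm u v ▸ hp) q (hst.S_symm w v ▸ hq)).1 hpq⟩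
  exact absurd hpq (hst.far_anti u v w x huv hwx huw hux hvw hvx hp hq)

theorem notMem_N_of_two_le (hst : IsStripSystem J G S N) {u v : α} (huv : J.Adj u v)
    (hlen : ∀ r, IsStripRung G S N u v r → 2 ≤ r.length) {p : V} (hp : p ∈ S u v)
    (hpu : p ∈ N u) : p ∉ N v := by
  intro hpv
  obtain ⟨r, hr, hpr⟩ := hst.rung_cover u v huv p hp
  have hlen := hlen r hr
  obtain ⟨⟨-, hnd, -⟩, -, ⟨a, ha, -, hau⟩, ⟨b, hb, -, hbv⟩⟩ := hr
  have hrne : r ≠ [] := List.ne_nil_of_mem hpr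
  obtain ⟨y, rfl⟩ := (hnd.head_eq_getLast_iff hrne).1 (by
    rw [List.head?_eq_some_head hrne] at ha
    rw [List.getLast?_eq_some_getLast hrne] at hb
    grind)
  simp at hlen

theorem vertexCompleteTo_end (hst : IsStripSystem J G S N) {t c s : α} (htc : J.Adj t c)
    (hts : J.Adj t s) (hcs : c ≠ s) {a : V} (ha : a ∈ S t c ∩ N t) :
    VertexCompleteTo G a (S t s ∩ N t) :=
  fun _ hp => (hst.fork t c s htc hts hcs _ ha.1 _ hp.1).2 ⟨ha.2, hp.2⟩

theorem N_sdiff_subset (hst : IsStripSystem J G S N) {t u v w : α}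
    (hnbr : ∀ x, J.Adj t x → x = u ∨ x = v ∨ x = w) :
    N t \ (S t u ∩ N t) ⊆ (S t v ∩ N t) ∪ (S t w ∩ N t) := by
  rintro y ⟨hy, hyu⟩
  obtain ⟨x, htx, hyx⟩ := hst.N_sub t hy
  rcases hnbr x htx with rfl | rfl | rfl
  exacts [absurd ⟨hyx, hy⟩ hyu, .inl ⟨hyx, hy⟩, .inr ⟨hyx, hy⟩]

end IsStripSystem

namespace IsMajorStrip

variable {J : SimpleGraph α} {G : SimpleGraph V} {S : α → α → Set V} {N : α → Set V} {x y : V}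

theorem completeTo_or (hx : IsMajorStrip J G S N x) {u v w : α} (huv : J.Adj u v)
    (huw : J.Adj u w) (hvw : v ≠ w) :
    VertexCompleteTo G x (S u v ∩ N u) ∨ VertexCompleteTo G x (S u w ∩ N u) := by
  by_contra h
  rw [not_or] at h
  exact hvw (hx.2 u v w huv huw h.1 h.2)

theorem exists_completeTo_common (hx : IsMajorStrip J G S N x) (hy : IsMajorStrip J G S N y)
    {u a b c : α} (ha : J.Adj u a) (hb : J.Adj u b) (hc : J.Adj u c) (hab : a ≠ b)
    (hac : a ≠ c) (hbc : b ≠ c) : ∃ v, J.Adj u v ∧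
      VertexCompleteTo G x (S u v ∩ N u) ∧ VertexCompleteTo G y (S u v ∩ N u) := by
  have := hx.completeTo_or ha hb hab
  have := hx.completeTo_or ha hc hac
  have := hx.completeTo_or hb hc hbc
  have := hy.completeTo_or ha hb hab
  have := hy.completeTo_or ha hc hac
  have := hy.completeTo_or hb hc hbc
  by_contra h
  push Not at h
  have := h a ha
  have := h b hb
  have := h c hc
  tauto

end IsMajorStrip

instance : DecidableRel K4g.Adj := fun u v => inferInstanceAs (Decidable (u ≠ v))

/-- The vertices `0, 1, 2, 3` stand for the paper's `1, 2, 3, 4`, so the edges joining vertices of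
different parity are `12, 23, 34, 41`, the strips with long rungs. `SeparatedEnds u v w x`
certifies that `N_uv` and `N_wx` are anticomplete: every common vertex `t` of the two edges is the
far end `v` (or `x`) of a long strip, whose end `N_uv` (or `N_wx`) then misses `N_t`. -/
def SeparatedEnds (u v w x : Fin 4) : Prop :=
  u ≠ v ∧ w ≠ x ∧ s(u, v) ≠ s(w, x) ∧ ∀ t, (t = u ∨ t = v) → (t = w ∨ t = x) →
    (t = v ∧ u.val % 2 ≠ v.val % 2) ∨ (t = x ∧ w.val % 2 ≠ x.val % 2)

instance (u v w x : Fin 4) : Decidable (SeparatedEnds u v w x) := by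
  unfold SeparatedEnds; infer_instance

set_option maxRecDepth 4000 in
theorem exists_separatedEnds :
    ∀ f : Fin 4 → Fin 4, (∀ u, f u ≠ u) → ∃ u w, SeparatedEnds u (f u) w (f w) := by
  decide

theorem separatedEnds_of_nodup {u v w x : Fin 4} (h : [u, v, w, x].Nodup) :
    SeparatedEnds u v w x := by
  simp only [List.nodup_cons, List.mem_cons, List.not_mem_nil, not_or] at h
  unfold SeparatedEnds
  refine ⟨by grind, by grind, by rw [Ne, Sym2.eq_iff]; grind, by grind⟩

theorem disjoint_OsetK4_union_S {G : SimpleGraph V} {S : Fin 4 → Fin 4 → Set V}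
    {N : Fin 4 → Set V} {i j t v : Fin 4} (htv : t ≠ v) :
    Disjoint (OsetK4 G S N i j ∪ {x | IsMajorStrip K4g G S N x}) (S t v) := by
  refine Set.disjoint_left.2 fun z hz hzS => ?_
  rcases hz with hz | hz
  exacts [hz.1 ⟨t, v, htv, hzS⟩, hz.1 ⟨t, v, htv, hzS⟩]

namespace IsSpecialK4StripSystem

variable {G : SimpleGraph V} {S : Fin 4 → Fin 4 → Set V} {N : Fin 4 → Set V}

theorem notMem_N_of_parity_ne (hS : IsSpecialK4StripSystem G S N) {u v : Fin 4}
    (huv : u.val % 2 ≠ v.val % 2) {p : V} (hp : p ∈ S u v) (hpu : p ∈ N u) : p ∉ N v := by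
  have hst := hS.strip
  have long : ∀ {a b : Fin 4}, a ≠ b → (∀ r, IsStripRung G S N a b r → 2 ≤ r.length) →
      ∀ q ∈ S a b, q ∈ N a → q ∉ N b := fun hab hlen _ => hst.notMem_N_of_two_le hab hlen
  have h01 := long (a := 0) (b := 1) (by decide) fun r hr => by have := (hS.b12 r hr).2; omega
  have h23 := long (a := 2) (b := 3) (by decide) fun r hr => by have := (hS.b34 r hr).2; omega
  have h03 := long (a := 0) (b := 3) (by decide) fun r hr => by have := (hS.b14 r hr).2; omega
  have h12 := long (a := 1) (b := 2) (by decide) fun r hr => by have := (hS.b23 r hr).2; omega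
  have swap : ∀ {a b : Fin 4}, (∀ q ∈ S a b, q ∈ N a → q ∉ N b) →
      p ∈ S b a → p ∈ N b → p ∉ N a := fun h hp hb ha => h p (hst.S_symm _ _ ▸ hp) ha hb
  intro hpv
  fin_cases u <;> fin_cases v <;> simp at huv
  exacts [h01 p hp hpu hpv, h03 p hp hpu hpv, swap h01 hp hpu hpv, h12 p hp hpu hpv,
    swap h12 hp hpu hpv, h23 p hp hpu hpv, swap h03 hp hpu hpv, swap h23 hp hpu hpv]

theorem not_adj_of_separatedEnds (hS : IsSpecialK4StripSystem G S N) {u v w x : Fin 4}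
    (hsep : SeparatedEnds u v w x) {p q : V} (hp : p ∈ S u v ∩ N u) (hq : q ∈ S w x ∩ N w) :
    ¬ G.Adj p q := by
  intro hpq
  obtain ⟨huv, hwx, hne, hends⟩ := hsep
  obtain ⟨t, htuv, htwx, hpt, hqt⟩ := hS.strip.exists_mem_N_of_adj huv hwx hne hp.1 hq.1 hpq
  rcases hends t htuv htwx with ⟨rfl, hpar⟩ | ⟨rfl, hpar⟩
  · exact hS.notMem_N_of_parity_ne hpar hp.1 hp.2 hpt
  · exact hS.notMem_N_of_parity_ne hpar hq.1 hq.2 hqt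

theorem adj_of_completeTo_ends (hS : IsSpecialK4StripSystem G S N) (hsf : SquareFree G)
    {u v w x : Fin 4} (hsep : SeparatedEnds u v w x) {z z' : V} (hzz' : z ≠ z')
    (hz : VertexCompleteTo G z (S u v ∩ N u)) (hz' : VertexCompleteTo G z' (S u v ∩ N u))
    (hzw : VertexCompleteTo G z (S w x ∩ N w)) (hz'w : VertexCompleteTo G z' (S w x ∩ N w)) :
    G.Adj z z' := by
  obtain ⟨p, hp⟩ := hS.strip.nonempty_end hsep.1
  obtain ⟨q, hq⟩ := hS.strip.nonempty_end hsep.2.1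
  have hpq : p ≠ q := fun h => Set.disjoint_left.mp
    (hS.strip.S_disj u v w x hsep.1 hsep.2.1 hsep.2.2.1) hp.1 (h ▸ hq.1)
  exact hsf.adj_of_common_nonadj_neighbors hzz' hpq (hS.not_adj_of_separatedEnds hsep hp hq)
    (hz hp) (hzw hq) (hz' hp) (hz'w hq)

theorem adj_of_isMajorStrip (hS : IsSpecialK4StripSystem G S N) (hsf : SquareFree G)
    {z z' : V} (hz : IsMajorStrip K4g G S N z) (hz' : IsMajorStrip K4g G S N z')
    (hzz' : z ≠ z') : G.Adj z z' := by
  have hcommon (u : Fin 4) : ∃ v, K4g.Adj u v ∧ VertexCompleteTo G z (S u v ∩ N u) ∧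
      VertexCompleteTo G z' (S u v ∩ N u) :=
    hz.exists_completeTo_common hz' (a := u + 1) (b := u + 2) (c := u + 3)
      (by revert u; decide) (by revert u; decide) (by revert u; decide)
      (by revert u; decide) (by revert u; decide) (by revert u; decide)
  choose f hf using hcommon
  obtain ⟨u, w, hsep⟩ := exists_separatedEnds f fun u => (hf u).1.symm
  exact hS.adj_of_completeTo_ends hsf hsep hzz' (hf u).2.1 (hf u).2.2 (hf w).2.1 (hf w).2.2

theorem completeTo_of_mem_OsetK4 (hS : IsSpecialK4StripSystem G S N) {i j t k : Fin 4} {z : V}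
    (hz : z ∈ OsetK4 G S N i j) (hij : i ≠ j) (ht : t = i ∨ t = j) (htk : t ≠ k)
    (hne : s(t, k) ≠ s(i, j)) : VertexCompleteTo G z (S t k ∩ N t) := by
  intro p hp
  refine hz.2.1 p ⟨?_, fun hpij => Set.disjoint_left.mp
    (hS.strip.S_disj t k i j htk hij hne) hp.1 hpij⟩
  rcases ht with rfl | rfl
  exacts [.inl hp.2, .inr hp.2]

theorem adj_of_mem_OsetK4 (hS : IsSpecialK4StripSystem G S N) (hsf : SquareFree G)
    {i j k l : Fin 4} (hijkl : [i, j, k, l].Nodup)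
    (hsep : ∀ a b, (a = k ∨ a = l) → (b = k ∨ b = l) → SeparatedEnds i a j b) {z z' : V}
    (hz : z ∈ OsetK4 G S N i j) (hz' : z' ∈ OsetK4 G S N i j ∪ {x | IsMajorStrip K4g G S N x})
    (hzz' : z ≠ z') : G.Adj z z' := by
  simp only [List.nodup_cons, List.mem_cons, List.not_mem_nil, not_or] at hijkl
  obtain ⟨⟨hij, hik, hil, -⟩, ⟨hjk, hjl, -⟩, ⟨hkl, -⟩, -⟩ := hijkl
  have hcommon (t : Fin 4) (ht : t = i ∨ t = j) : ∃ a, (a = k ∨ a = l) ∧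
      VertexCompleteTo G z (S t a ∩ N t) ∧ VertexCompleteTo G z' (S t a ∩ N t) := by
    have htk : t ≠ k := by grind
    have htl : t ≠ l := by grind
    have hO {y : V} (hy : y ∈ OsetK4 G S N i j) {a : Fin 4} (ha : a = k ∨ a = l) :
        VertexCompleteTo G y (S t a ∩ N t) :=
      hS.completeTo_of_mem_OsetK4 hy hij ht (by grind) (by rw [Ne, Sym2.eq_iff]; grind)
    rcases hz' with hz' | hz'
    · exact ⟨k, .inl rfl, hO hz (.inl rfl), hO hz' (.inl rfl)⟩
    · rcases hz'.completeTo_or htk htl hkl with h | h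
      exacts [⟨k, .inl rfl, hO hz (.inl rfl), h⟩, ⟨l, .inr rfl, hO hz (.inr rfl), h⟩]
  obtain ⟨a, ha, hza, hz'a⟩ := hcommon i (.inl rfl)
  obtain ⟨b, hb, hzb, hz'b⟩ := hcommon j (.inr rfl)
  exact hS.adj_of_completeTo_ends hsf (hsep a b ha hb) hzz' hza hz'a hzb hz'b

theorem isClique_OsetK4_union (hS : IsSpecialK4StripSystem G S N) (hsf : SquareFree G)
    {i j k l : Fin 4} (hijkl : [i, j, k, l].Nodup)
    (hsep : ∀ a b, (a = k ∨ a = l) → (b = k ∨ b = l) → SeparatedEnds i a j b) :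
    G.IsClique (OsetK4 G S N i j ∪ {x | IsMajorStrip K4g G S N x}) := by
  rintro z (hz | hz) z' hz' hzz'
  · exact hS.adj_of_mem_OsetK4 hsf hijkl hsep hz hz' hzz'
  rcases hz' with hz' | hz'
  · exact (hS.adj_of_mem_OsetK4 hsf hijkl hsep hz' (.inr hz) hzz'.symm).symm
  · exact hS.adj_of_isMajorStrip hsf hz hz' hzz'

theorem completeTo_ends_of_mem {t s c b : Fin 4} (hS : IsSpecialK4StripSystem G S N)
    (htscb : [t, s, c, b].Nodup) (hC : S t c ⊆ N c) {a : V} (ha : a ∈ S t c ∩ N t) :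
    VertexCompleteTo G a (S t s ∩ N t) ∧ VertexCompleteTo G a (S c b ∩ N c) := by
  simp only [List.nodup_cons, List.mem_cons, List.not_mem_nil, not_or] at htscb
  obtain ⟨⟨hts, htc, htb, -⟩, ⟨hsc, -, -⟩, ⟨hcb, -⟩, -⟩ := htscb
  exact ⟨hS.strip.vertexCompleteTo_end htc hts (Ne.symm hsc) ha,
    hS.strip.vertexCompleteTo_end (Ne.symm htc) hcb htb ⟨hS.strip.S_symm t c ▸ ha.1, hC ha.1⟩⟩

theorem isClique_end_of_subset_N {t s c b : Fin 4} (hS : IsSpecialK4StripSystem G S N)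
    (hsf : SquareFree G) (htscb : [t, s, c, b].Nodup) (hC : S t c ⊆ N c) :
    G.IsClique (S t c ∩ N t) := fun _ ha _ ha' haa' =>
  have h := hS.completeTo_ends_of_mem htscb hC ha
  have h' := hS.completeTo_ends_of_mem htscb hC ha'
  hS.adj_of_completeTo_ends hsf (separatedEnds_of_nodup htscb) haa' h.1 h'.1 h.2 h'.2

theorem completeTo_end_of_subset_N {t s c b : Fin 4} (hS : IsSpecialK4StripSystem G S N)
    (hsf : SquareFree G) (htscb : [t, s, c, b].Nodup) (hedge : s(t, s) = s(0, 1))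
    (hC : S t c ⊆ N c) :
    CompleteTo G (OsetK4 G S N 0 1 ∪ {x | IsMajorStrip K4g G S N x}) (S t c ∩ N t) := by
  have hends := fun {a} => hS.completeTo_ends_of_mem htscb hC (a := a)
  have hsep := separatedEnds_of_nodup htscb
  simp only [List.nodup_cons, List.mem_cons, List.not_mem_nil, not_or] at htscb
  obtain ⟨⟨hts, htc, htb, -⟩, ⟨hsc, -, -⟩, ⟨hcb, -⟩, -⟩ := htscb
  rintro z (hz | hz) a ha
  · rw [Sym2.eq_iff] at hedge
    exact hS.completeTo_of_mem_OsetK4 hz (by decide) (by grind) htc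
      (by rw [Ne, Sym2.eq_iff]; grind) ha
  · by_contra hza
    have hzts := (hz.completeTo_or htc hts (Ne.symm hsc)).resolve_left fun h => hza (h ha)
    have hzcb := (hz.completeTo_or (Ne.symm htc) hcb htb).resolve_left
      fun h => hza (h ⟨hS.strip.S_symm t c ▸ ha.1, hC ha.1⟩)
    have hza' := (disjoint_OsetK4_union_S (i := 0) (j := 1) htc).ne_of_mem (.inr hz) ha.1
    exact hza (hS.adj_of_completeTo_ends hsf hsep hza' hzts (hends ha).1 hzcb (hends ha).2)

theorem exists_isClique_union_N_sdiff {t s c b : Fin 4} (hS : IsSpecialK4StripSystem G S N)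
    (hsf : SquareFree G) (htscb : [t, s, c, b].Nodup) (hedge : s(t, s) = s(0, 1))
    (hC : S t c ⊆ N c) (hX : G.IsClique (OsetK4 G S N 0 1 ∪ {x | IsMajorStrip K4g G S N x})) :
    ∃ k, k ≠ t ∧ G.IsClique
      (OsetK4 G S N 0 1 ∪ {x | IsMajorStrip K4g G S N x} ∪ (N t \ (S t k ∩ N t))) := by
  have hst := hS.strip
  have hCcl := hS.isClique_end_of_subset_N hsf htscb hC
  have hXC := hS.completeTo_end_of_subset_N hsf htscb hedge hC
  have hmem (x : Fin 4) : x ∈ [t, s, c, b] := by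
    rw [← List.mem_toFinset, Finset.eq_univ_of_card _ (List.toFinset_card_of_nodup htscb)]
    exact Finset.mem_univ x
  simp only [List.nodup_cons, List.mem_cons, List.not_mem_nil, not_or] at htscb hmem
  obtain ⟨⟨hts, htc, htb, -⟩, ⟨hsc, hsb, -⟩, ⟨hcb, -⟩, -⟩ := htscb
  have hdisj {v : Fin 4} (htv : t ≠ v) :
      Disjoint (OsetK4 G S N 0 1 ∪ {x | IsMajorStrip K4g G S N x}) (S t v ∩ N t) :=
    (disjoint_OsetK4_union_S htv).mono_right Set.inter_subset_left
  have hends {v w : Fin 4} (htv : t ≠ v) (htw : t ≠ w) (hvw : v ≠ w) :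
      CompleteTo G (S t v ∩ N t) (S t w ∩ N t) :=
    fun _ ha _ hb => hst.vertexCompleteTo_end htv htw hvw ha hb
  have hcov : ∀ z ∈ OsetK4 G S N 0 1 ∪ {x | IsMajorStrip K4g G S N x},
      VertexCompleteTo G z (S t s ∩ N t) ∨ VertexCompleteTo G z (S t b ∩ N t) := by
    rintro z (hz | hz)
    · rw [Sym2.eq_iff] at hedge
      exact .inr (hS.completeTo_of_mem_OsetK4 hz (by decide) (by grind) htb
        (by rw [Ne, Sym2.eq_iff]; grind))
    · exact hz.completeTo_or hts htb hsb
  rcases hsf.isClique_union_or hX (hends hts htb hsb) (hdisj hts) (hdisj htb) hcov with h | h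
  · exact ⟨b, Ne.symm htb, isClique_union_of_subset h hCcl hXC (hends hts htc hsc)
      (hst.N_sdiff_subset fun x (htx : t ≠ x) => by have := hmem x; tauto)⟩
  · exact ⟨s, Ne.symm hts, isClique_union_of_subset h hCcl hXC (hends htb htc (Ne.symm hcb))
      (hst.N_sdiff_subset fun x (htx : t ≠ x) => by have := hmem x; tauto)⟩

end IsSpecialK4StripSystem

theorem specialK4_cliques_general
    {V : Type*} (G : SimpleGraph V)
    (hsf : SquareFree G)
    (S : Fin 4 → Fin 4 → Set V) (N : Fin 4 → Set V)
    (hS : IsSpecialK4StripSystem G S N)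
    (M : Set V) (hM : M = {x | IsMajorStrip K4g G S N x}) :
    (G.IsClique (OsetK4 G S N 0 1 ∪ M) ∧ G.IsClique (OsetK4 G S N 2 3 ∪ M)) ∧
    ((∃ k : Fin 4, k ≠ 0 ∧
        G.IsClique (OsetK4 G S N 0 1 ∪ M ∪ (N 0 \ (S 0 k ∩ N 0)))) ∧
     (∃ l : Fin 4, l ≠ 1 ∧
        G.IsClique (OsetK4 G S N 0 1 ∪ M ∪ (N 1 \ (S 1 l ∩ N 1))))) := by
  subst hM
  have h01 := hS.isClique_OsetK4_union hsf (i := 0) (j := 1) (k := 2) (l := 3)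
    (by decide) (by decide)
  have h23 := hS.isClique_OsetK4_union hsf (i := 2) (j := 3) (k := 0) (l := 1)
    (by decide) (by decide)
  exact ⟨⟨h01, h23⟩,
    hS.exists_isClique_union_N_sdiff hsf (s := 1) (c := 2) (b := 3) (by decide) rfl hS.a13.2 h01,
    hS.exists_isClique_union_N_sdiff hsf (s := 0) (c := 3) (b := 2) (by decide) Sym2.eq_swap
      hS.a24.2 h01⟩

/-- cliques in a special `K₄`-strip system. -/
theorem specialK4_cliques
    {V : Type*} (G : SimpleGraph V)
    (hsf : SquareFree G) (hberge : IsBerge G)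
    (S : Fin 4 → Fin 4 → Set V) (N : Fin 4 → Set V)
    (hS : IsSpecialK4StripSystem G S N)
    (M : Set V) (hM : M = {x | IsMajorStrip K4g G S N x}) :
    (G.IsClique (OsetK4 G S N 0 1 ∪ M) ∧ G.IsClique (OsetK4 G S N 2 3 ∪ M)) ∧
    ((∃ k : Fin 4, k ≠ 0 ∧
        G.IsClique (OsetK4 G S N 0 1 ∪ M ∪ (N 0 \ (S 0 k ∩ N 0)))) ∧
     (∃ l : Fin 4, l ≠ 1 ∧
        G.IsClique (OsetK4 G S N 0 1 ∪ M ∪ (N 1 \ (S 1 l ∩ N 1))))) :=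
  specialK4_cliques_general G hsf S N hS M hM

end Paper
end

section
/- Let G be a square-free Berge graph, J a 3-connected graph, and (S,N) a J-strip system in G. Then for every edge uv of J there exists a triad {t,t',t''} of G with t∈S_uv and t',t''∈V(S,N)∖(S_uv∪N_u∪N_v). -/
open SimpleGraph

namespace Paper

variable {V : Type*} {α : Type*}

/-!
Every vertex of `X = V(S,N) \ (S_uv ∪ N_u ∪ N_v)` is anticomplete to the nonempty set `S_uv`,
so it suffices to show that `X` is not a clique. Suppose it is. The strips of `J - {u,v}` lie in
`X`, so `J - {u,v}` has no two disjoint edges, and no vertex of `S_ab \ N_a` in `X` can coexist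
with a vertex of `X` in another strip at `a`.
If `J - {u,v}` contains a path `b a c`, the strips `S_ab`, `S_ac` are trivial (all their rungs
have one vertex). If `bc` is an edge, so is `S_bc`, and the triangle `abc` violates the parity
condition. Otherwise 3-connectivity makes `b` and `c` adjacent to `u`, the strips `S_ub`, `S_uc`
are trivial too, and one vertex from each strip of the cycle `u b a c` gives a square.
Without such a path, `J - {u,v}` has an edge `wx` with `uwx` a triangle of `J`. One of its strips
has a rung of at least two vertices (by parity, if the others are trivial), and such a rung
yields either a non-edge in `X` or a square.
-/
theorem hasHole_four {G : SimpleGraph V} {a b c d : V} (hab : G.Adj a b) (hbc : G.Adj b c)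
    (hcd : G.Adj c d) (hda : G.Adj d a) (hac : ¬ G.Adj a c) (hbd : ¬ G.Adj b d)
    (hac' : a ≠ c) (hbd' : b ≠ d) : HasHole G 4 := by
  have hinj : Function.Injective ![a, b, c, d] := by
    intro i j h
    fin_cases i <;> fin_cases j <;>
      simp_all [hab.ne, hbc.ne, hcd.ne, hda.ne, hab.ne', hbc.ne', hcd.ne', hda.ne']
  refine ⟨⟨⟨_, hinj⟩, fun {i j} => ?_⟩⟩
  rw [Function.Embedding.coeFn_mk]
  fin_cases i <;> fin_cases j <;>
    simp [hab, hbc, hcd, hda, hab.symm, hbc.symm, hcd.symm, hda.symm, hac, hbd, G.adj_comm c a,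
      G.adj_comm d b] <;> decide

theorem IsChordlessPath.reverse {G : SimpleGraph V} {p : List V} (hp : IsChordlessPath G p) :
    IsChordlessPath G p.reverse := by
  obtain ⟨hchain, hnodup, hchord⟩ := hp
  refine ⟨List.isChain_reverse.mpr (hchain.imp fun _ _ h => h.symm), List.nodup_reverse.mpr hnodup,
    fun i j hij => ?_⟩
  have hj := j.isLt
  simp only [List.length_reverse] at hj
  simpa [List.getElem_reverse, G.adj_comm] using
    hchord ⟨p.length - 1 - j, by omega⟩ ⟨p.length - 1 - i, by omega⟩ (by simp; omega)

theorem IsChordlessPath.not_isClique {G : SimpleGraph V} {p : List V} (hp : IsChordlessPath G p)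
    (hlen : 3 ≤ p.length) : ¬ G.IsClique {z | z ∈ p} := by
  obtain ⟨-, hnodup, hchord⟩ := hp
  intro hX
  have h0 : 0 < p.length := by omega
  have hl : p.length - 1 < p.length := by omega
  refine hchord ⟨0, h0⟩ ⟨p.length - 1, hl⟩ (by simp; omega)
    (hX (List.getElem_mem h0) (List.getElem_mem hl) ?_)
  simpa [hnodup.getElem_inj_iff] using (by omega : 0 ≠ p.length - 1)

theorem triangle_sum_mod_two_eq_one {J : SimpleGraph α} (f : Sym2 α → ℕ)
    (hpar : ∀ (u : α) (c : J.Walk u u), c.IsCycle → (c.edges.map f).sum % 2 = c.length % 2)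
    {a b c : α} (hab : J.Adj a b) (hbc : J.Adj b c) (hac : J.Adj a c) :
    (f s(a, b) + f s(b, c) + f s(a, c)) % 2 = 1 := by
  have hcyc : (Walk.cons hab (Walk.cons hbc (Walk.cons hac.symm Walk.nil))).IsCycle := by
    simp [Walk.isCycle_def, Walk.isTrail_def, hab.ne, hbc.ne, hac.ne, hab.ne', hac.ne']
  simpa [Sym2.eq_swap (a := c), add_assoc] using hpar a _ hcyc

theorem ThreeConnected.exists_ne [Fintype α] {J : SimpleGraph α} (hJ : ThreeConnected J)
    (a b c : α) : ∃ q, q ≠ a ∧ q ≠ b ∧ q ≠ c := by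
  classical
  obtain ⟨q, -, hq⟩ := Finset.exists_mem_notMem_of_card_lt_card
    ((Finset.card_le_three (a := a) (b := b) (c := c)).trans_lt
      (Finset.card_univ (α := α) ▸ hJ.1 : 3 < Finset.univ.card))
  simp only [Finset.mem_insert, Finset.mem_singleton, not_or] at hq
  exact ⟨q, hq⟩

theorem ThreeConnected.exists_adj_ne [Fintype α] {J : SimpleGraph α} (hJ : ThreeConnected J)
    {z r s : α} (hzr : z ≠ r) (hzs : z ≠ s) : ∃ y, J.Adj z y ∧ y ≠ r ∧ y ≠ s := by
  obtain ⟨q, hq⟩ := hJ.exists_ne z r s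
  have hconn := hJ.2 {r, s} (by
    rw [Nat.card_coe_set_eq]; exact (Set.ncard_insert_le _ _).trans (by simp))
  obtain ⟨p⟩ := hconn.preconnected ⟨z, by simp [hzr, hzs]⟩ ⟨q, by simp [hq.2.1, hq.2.2]⟩
  have hnil : ¬ p.Nil := Walk.not_nil_of_ne (by simpa [Subtype.ext_iff] using Ne.symm hq.1)
  have hy := p.snd.prop
  simp only [Set.mem_compl_iff, Set.mem_insert_iff, Set.mem_singleton_iff, not_or] at hy
  exact ⟨p.snd, Walk.adj_snd hnil, hy⟩

section StripSystem

variable {G : SimpleGraph V} {J : SimpleGraph α} {S : α → α → Set V} {N : α → Set V}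
  {u v : α} {p : List V}

theorem IsStripRung.reverse (hS : S v u = S u v) (hp : IsStripRung G S N u v p) :
    IsStripRung G S N v u p.reverse := by
  obtain ⟨hpath, hmem, ⟨a, ha, haN, haU⟩, ⟨b, hb, hbN, hbU⟩⟩ := hp
  exact ⟨hpath.reverse, fun z hz => hS ▸ hmem z (List.mem_reverse.mp hz),
    ⟨b, by rw [List.head?_reverse, hb], hbN, fun z hz => hbU z (List.mem_reverse.mp hz)⟩,
    ⟨a, by rw [List.getLast?_reverse, ha], haN, fun z hz => haU z (List.mem_reverse.mp hz)⟩⟩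

theorem IsStripRung.length_eq_one (hp : IsStripRung G S N u v p) (h : ∀ z ∈ p, z ∈ N u) :
    p.length = 1 := by
  obtain ⟨⟨-, hnodup, -⟩, -, ⟨a, ha, -, haU⟩, -⟩ := hp
  have hrep : p = List.replicate p.length a :=
    List.eq_replicate_iff.mpr ⟨rfl, fun z hz => haU z hz (h z hz)⟩
  have hle := List.nodup_replicate.mp (hrep ▸ hnodup)
  have hpos := List.length_pos_of_mem (List.mem_of_mem_head? ha)
  omega

theorem IsStripRung.exists_mem_notMem_N (hp : IsStripRung G S N u v p) (hlen : 3 ≤ p.length) :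
    ∃ m ∈ S u v, m ∉ N u ∧ m ∉ N v := by
  obtain ⟨⟨-, hnodup, -⟩, hmem, ⟨a, ha, -, haU⟩, ⟨b, hb, -, hbU⟩⟩ := hp
  have ha0 : p[0] = a := (List.getElem?_eq_some_iff.mp (List.head?_eq_getElem? ▸ ha)).2
  have hb0 : p[p.length - 1] = b :=
    (List.getElem?_eq_some_iff.mp (List.getLast?_eq_getElem? ▸ hb)).2
  have hne : ∀ i (hi : i < p.length), i ≠ 1 → p[1] ≠ p[i] := fun i hi h1 h =>
    h1 (hnodup.getElem_inj_iff.mp h).symm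
  exact ⟨p[1], hmem _ (List.getElem_mem _),
    fun h => hne 0 (by omega) (by omega) (ha0 ▸ haU _ (List.getElem_mem _) h),
    fun h => hne (p.length - 1) (by omega) (by omega) (hb0 ▸ hbU _ (List.getElem_mem _) h)⟩

theorem IsStripRung.exists_adj_of_length_eq_two (hp : IsStripRung G S N u v p)
    (hlen : p.length = 2) : ∃ h l, G.Adj h l ∧ h ∈ S u v ∧ l ∈ S u v ∧
      h ∈ N u ∧ h ∉ N v ∧ l ∈ N v ∧ l ∉ N u := by
  obtain ⟨⟨hchain, hnodup, -⟩, hmem, ⟨a, ha, haN, haU⟩, ⟨b, hb, hbN, hbU⟩⟩ := hp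
  obtain ⟨h, l, rfl⟩ := List.length_eq_two.mp hlen
  simp only [List.head?_cons, Option.some.injEq, List.getLast?_cons_cons, List.getLast?_singleton]
    at ha hb
  subst ha hb
  have hne : h ≠ l := by simpa using hnodup
  exact ⟨h, l, List.isChain_pair.mp hchain, hmem h (by simp), hmem l (by simp), haN,
    fun hN => hne (hbU h (by simp) hN), hbN, fun hN => hne (haU l (by simp) hN).symm⟩

namespace IsStripSystem

variable (hSN : IsStripSystem J G S N)
include hSN

theorem mem_N_of_subset (huv : J.Adj u v) (h : S u v ⊆ N u) {z : V} (hz : z ∈ S u v) :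
    z ∈ N v := by
  obtain ⟨p, ⟨-, hmem, ⟨a, -, -, haU⟩, ⟨b, hb, hbN, -⟩⟩, hzp⟩ := hSN.rung_cover u v huv z hz
  have hbp := List.mem_of_mem_getLast? hb
  rwa [haU z hzp (h hz), ← haU b hbp (h (hmem b hbp))]

theorem exists_rung_two_le_length (huv : J.Adj u v) {z : V} (hz : z ∈ S u v) (hzN : z ∉ N u) :
    ∃ p, IsStripRung G S N u v p ∧ 2 ≤ p.length := by
  obtain ⟨p, hp, hzp⟩ := hSN.rung_cover u v huv z hz
  refine ⟨p, hp, ?_⟩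
  obtain ⟨-, -, ⟨a, ha, haN, -⟩, -⟩ := hp
  rcases p with _ | ⟨x, _ | ⟨y, rest⟩⟩
  · simp at hzp
  · simp only [List.head?_cons, Option.some.injEq, List.mem_singleton] at ha hzp
    exact absurd (hzp ▸ ha ▸ haN) hzN
  · simp

theorem exists_rung_length_eq (huv : J.Adj u v) {R : Sym2 α → List V}
    (hR : IsChoiceOfRungs J G S N R) :
    ∃ p, IsStripRung G S N u v p ∧ p.length = (R s(u, v)).length := by
  rcases hR u v huv with hp | hp
  · exact ⟨_, hp, rfl⟩
  · exact ⟨_, hp.reverse (hSN.S_symm u v), List.length_reverse⟩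

theorem length_eq_one_of_subset (huv : J.Adj u v) {R : Sym2 α → List V}
    (hR : IsChoiceOfRungs J G S N R) (h : S u v ⊆ N u) : (R s(u, v)).length = 1 := by
  obtain ⟨p, hp, hlen⟩ := hSN.exists_rung_length_eq huv hR
  exact hlen ▸ hp.length_eq_one fun z hz => h (hp.2.1 z hz)

theorem nonempty (huv : J.Adj u v) : (S u v).Nonempty := by
  obtain ⟨R, hR, -⟩ := hSN.parity
  obtain ⟨p, ⟨-, hmem, ⟨a, ha, -⟩, -⟩, -⟩ := hSN.exists_rung_length_eq huv hR
  exact ⟨a, hmem a (List.mem_of_mem_head? ha)⟩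

theorem notMem_N {a b c : α} (hab : J.Adj a b) (hca : c ≠ a) (hcb : c ≠ b) {z : V}
    (hz : z ∈ S a b) : z ∉ N c := fun hzN => by
  obtain ⟨d, hcd, hzd⟩ := hSN.N_sub c hzN
  refine Set.disjoint_left.mp (hSN.S_disj a b c d hab hcd ?_) hz hzd
  simp [hca.symm, hcb.symm]

theorem ne_of_mem {a b c d : α} (hab : J.Adj a b) (hcd : J.Adj c d) (hne : s(a, b) ≠ s(c, d))
    {z z' : V} (hz : z ∈ S a b) (hz' : z' ∈ S c d) : z ≠ z' :=
  fun h => Set.disjoint_left.mp (hSN.S_disj a b c d hab hcd hne) hz (h ▸ hz')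

theorem subset_inter_of_subset {a b : α} (hab : J.Adj a b) (h : S a b ⊆ N a) :
    S a b ⊆ N a ∩ N b := fun _ hz => ⟨h hz, hSN.mem_N_of_subset hab h hz⟩

theorem subset_inter_symm {a b : α} (h : S a b ⊆ N a ∩ N b) : S b a ⊆ N b ∩ N a :=
  Set.inter_comm (N a) (N b) ▸ hSN.S_symm a b ▸ h

theorem not_isClique_of_fork {X : Set V} {a b c : α} (hab : J.Adj a b) (hac : J.Adj a c)
    (hbc : b ≠ c) {z z' : V} (hz : z ∈ S a b) (hzN : z ∉ N a) (hz' : z' ∈ S a c)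
    (hzX : z ∈ X) (hz'X : z' ∈ X) : ¬ G.IsClique X := fun hX =>
  hzN ((hSN.fork a b c hab hac hbc z hz z' hz').mp
    (hX hzX hz'X (hSN.ne_of_mem hab hac (mt Sym2.congr_right.mp hbc) hz hz'))).1

theorem not_isClique_of_far {X : Set V} {a b c d : α} (hab : J.Adj a b) (hcd : J.Adj c d)
    (hac : a ≠ c) (had : a ≠ d) (hbc : b ≠ c) (hbd : b ≠ d) {z z' : V} (hz : z ∈ S a b)
    (hz' : z' ∈ S c d) (hzX : z ∈ X) (hz'X : z' ∈ X) : ¬ G.IsClique X := fun hX =>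
  hSN.far_anti a b c d hab hcd hac had hbc hbd hz hz'
    (hX hzX hz'X (hSN.ne_of_mem hab hcd (by simp [hac, had]) hz hz'))

theorem hasHole_of_triangle {a b c : α} (hab : J.Adj a b) (hbc : J.Adj b c) (hac : J.Adj a c)
    (hSab : S a b ⊆ N a ∩ N b) (hSac : S a c ⊆ N a ∩ N c) (hp : IsStripRung G S N b c p)
    (hlen : p.length = 2) : HasHole G 4 := by
  obtain ⟨h, l, hhl, hh, hl, hhb, hhc, hlc, hlb⟩ := hp.exists_adj_of_length_eq_two hlen
  obtain ⟨z, hz⟩ := hSN.nonempty hab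
  obtain ⟨z', hz'⟩ := hSN.nonempty hac
  have hzN := hSab hz
  have hz'N := hSac hz'
  -- `z h l z'` is a square: `z` sees only `h` of the rung at `b`, and `z'` only `l` at `c`
  have hfb := hSN.fork b a c hab.symm hbc hac.ne z (hSN.S_symm a b ▸ hz)
  have hfc := hSN.fork c b a hbc.symm hac.symm hab.ne'
  refine hasHole_four ((hfb h hh).mpr ⟨hzN.2, hhb⟩) hhl
    ((hfc l (hSN.S_symm b c ▸ hl) z' (hSN.S_symm a c ▸ hz')).mpr ⟨hlc, hz'N.2⟩)
    ((hSN.fork a c b hac hab hbc.ne' z' hz' z hz).mpr ⟨hz'N.1, hzN.1⟩)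
    (fun hzl => hlb ((hfb l hl).mp hzl).2)
    (fun hhz => hhc ((hfc h (hSN.S_symm b c ▸ hh) z' (hSN.S_symm a c ▸ hz')).mp hhz).1)
    (fun hzl => hlb (hzl ▸ hzN.2)) (fun hhz => hhc (hhz ▸ hz'N.2))

theorem hasHole_of_fourCycle {a b c d : α} (hab : J.Adj a b) (hbc : J.Adj b c) (hcd : J.Adj c d)
    (hda : J.Adj d a) (hac : a ≠ c) (hbd : b ≠ d) (hSab : S a b ⊆ N a ∩ N b)
    (hSbc : S b c ⊆ N b ∩ N c) (hScd : S c d ⊆ N c ∩ N d) (hSda : S d a ⊆ N d ∩ N a) :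
    HasHole G 4 := by
  obtain ⟨z₁, hz₁⟩ := hSN.nonempty hab
  obtain ⟨z₂, hz₂⟩ := hSN.nonempty hbc
  obtain ⟨z₃, hz₃⟩ := hSN.nonempty hcd
  obtain ⟨z₄, hz₄⟩ := hSN.nonempty hda
  refine hasHole_four
    ((hSN.fork b a c hab.symm hbc hac z₁ (hSN.S_symm a b ▸ hz₁) z₂ hz₂).mpr
      ⟨(hSab hz₁).2, (hSbc hz₂).1⟩)
    ((hSN.fork c b d hbc.symm hcd hbd z₂ (hSN.S_symm b c ▸ hz₂) z₃ hz₃).mpr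
      ⟨(hSbc hz₂).2, (hScd hz₃).1⟩)
    ((hSN.fork d c a hcd.symm hda hac.symm z₃ (hSN.S_symm c d ▸ hz₃) z₄ hz₄).mpr
      ⟨(hScd hz₃).2, (hSda hz₄).1⟩)
    ((hSN.fork a d b hda.symm hab hbd.symm z₄ (hSN.S_symm d a ▸ hz₄) z₁ hz₁).mpr
      ⟨(hSda hz₄).2, (hSab hz₁).1⟩)
    (hSN.far_anti a b c d hab hcd hac hda.ne' hbc.ne hbd hz₁ hz₃)
    (hSN.far_anti b c d a hbc hda hbd hab.ne' hcd.ne hac.symm hz₂ hz₄)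
    (hSN.ne_of_mem hab hcd (by simp [hac, hda.ne']) hz₁ hz₃)
    (hSN.ne_of_mem hbc hda (by simp [hbd, hab.ne']) hz₂ hz₄)

theorem subset_N_of_isClique {X : Set V} (hX : G.IsClique X) {a b c : α} (hab : J.Adj a b)
    (hac : J.Adj a c) (hbc : b ≠ c) (hSab : S a b ⊆ X) (hSac : S a c ⊆ X) : S a b ⊆ N a := by
  intro z hz
  by_contra hzN
  obtain ⟨z', hz'⟩ := hSN.nonempty hac
  exact hSN.not_isClique_of_fork hab hac hbc hz hzN hz' (hSab hz) (hSac hz') hX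

end IsStripSystem

def stripVertsAway (J : SimpleGraph α) (S : α → α → Set V) (N : α → Set V) (u v : α) : Set V :=
  stripVerts J S \ (S u v ∪ N u ∪ N v)

namespace IsStripSystem

variable (hSN : IsStripSystem J G S N) (huv : J.Adj u v)
include hSN huv

theorem subset_stripVertsAway {a b : α} (hab : J.Adj a b) (ha : a ∉ ({u, v} : Set α))
    (hb : b ∉ ({u, v} : Set α)) : S a b ⊆ stripVertsAway J S N u v := fun z hz => by
  simp only [Set.mem_insert_iff, Set.mem_singleton_iff, not_or] at ha hb
  obtain ⟨hau, hav⟩ := ha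
  obtain ⟨hbu, hbv⟩ := hb
  refine ⟨⟨a, b, hab, hz⟩, ?_⟩
  simp only [Set.mem_union, not_or]
  exact ⟨⟨fun h => hSN.ne_of_mem hab huv (by simp [hau, hav]) hz h rfl,
    hSN.notMem_N hab (Ne.symm hau) (Ne.symm hbu) hz⟩,
    hSN.notMem_N hab (Ne.symm hav) (Ne.symm hbv) hz⟩

theorem mem_stripVertsAway {b : α} (hub : J.Adj u b) (hbv : b ≠ v) {z : V} (hz : z ∈ S u b)
    (hzN : z ∉ N u) : z ∈ stripVertsAway J S N u v := by
  refine ⟨⟨u, b, hub, hz⟩, ?_⟩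
  simp only [Set.mem_union, not_or]
  exact ⟨⟨fun h => hSN.ne_of_mem hub huv (mt Sym2.congr_right.mp hbv) hz h rfl, hzN⟩,
    hSN.notMem_N hub huv.ne' hbv.symm hz⟩

theorem not_adj_of_mem_stripVertsAway {t z : V} (ht : t ∈ S u v)
    (hz : z ∈ stripVertsAway J S N u v) : ¬ G.Adj t z := fun htz => by
  obtain ⟨⟨a, b, hab, hzab⟩, hzuv⟩ := hz
  simp only [Set.mem_union, not_or] at hzuv
  obtain ⟨⟨hzS, hzu⟩, hzv⟩ := hzuv
  have hend : ∀ {a b}, J.Adj a b → z ∈ S a b → a ∉ ({u, v} : Set α) := by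
    rintro a b hab hz (rfl | rfl)
    · have hvb : v ≠ b := by rintro rfl; exact hzS hz
      exact hzu ((hSN.fork a v b huv hab hvb t ht z hz).mp htz).2
    · have hub : u ≠ b := by rintro rfl; exact hzS (hSN.S_symm a u ▸ hz)
      exact hzv ((hSN.fork a u b huv.symm hab hub t (hSN.S_symm u a ▸ ht) z hz).mp htz).2
  have ha := hend hab hzab
  have hb := hend hab.symm (hSN.S_symm a b ▸ hzab)
  simp only [Set.mem_insert_iff, Set.mem_singleton_iff, not_or] at ha hb
  obtain ⟨hau, hav⟩ := ha
  obtain ⟨hbu, hbv⟩ := hb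
  exact hSN.far_anti u v a b huv hab (Ne.symm hau) (Ne.symm hbu) (Ne.symm hav) (Ne.symm hbv) ht hzab
    htz

theorem not_isClique_stripVertsAway_of_triangle_of_subset (hsf : SquareFree G) {w x : α}
    (huw : J.Adj u w) (hux : J.Adj u x) (hwx : J.Adj w x) (hw : w ∉ ({u, v} : Set α))
    (hx : x ∉ ({u, v} : Set α)) (hSux : S u x ⊆ N u) :
    ¬ G.IsClique (stripVertsAway J S N u v) := by
  intro hX
  have hwv : w ≠ v := fun h => hw (Or.inr h)
  have hXwx := hSN.subset_stripVertsAway huv hwx hw hx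
  have hSux' := hSN.subset_inter_of_subset hux hSux
  by_cases hSwx : S w x ⊆ N w
  · obtain ⟨R, hR, hpar⟩ := hSN.parity
    obtain ⟨p, hp, hlen⟩ := hSN.exists_rung_length_eq huw hR
    -- the triangle `uwx` is odd, so the rung `p` has an even number of vertices
    have hodd := triangle_sum_mod_two_eq_one (fun e => (R e).length - 1) hpar huw hwx hux
    simp only [hSN.length_eq_one_of_subset hwx hR hSwx, hSN.length_eq_one_of_subset hux hR hSux,
      ← hlen] at hodd
    obtain hlen2 | hlen3 : p.length = 2 ∨ 3 ≤ p.length := by omega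
    · exact hsf (hSN.hasHole_of_triangle hux.symm huw hwx.symm (hSN.subset_inter_symm hSux')
        (hSN.subset_inter_symm (hSN.subset_inter_of_subset hwx hSwx)) hp hlen2)
    · obtain ⟨m, hm, hmu, hmw⟩ := hp.exists_mem_notMem_N hlen3
      obtain ⟨z, hz⟩ := hSN.nonempty hwx
      exact hSN.not_isClique_of_fork huw.symm hwx hux.ne (hSN.S_symm u w ▸ hm) hmw hz
        (hSN.mem_stripVertsAway huv huw hwv hm hmu) (hXwx hz) hX
  · obtain ⟨z, hz, hzN⟩ := Set.not_subset.mp hSwx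
    obtain ⟨p, hp, hlen⟩ := hSN.exists_rung_two_le_length hwx hz hzN
    obtain hlen2 | hlen3 : p.length = 2 ∨ 3 ≤ p.length := by omega
    · obtain ⟨-, l, -, -, hl, -, -, -, hlw⟩ := hp.exists_adj_of_length_eq_two hlen2
      have hSuw : S u w ⊆ N u := by
        intro y hy
        by_contra hyN
        exact hSN.not_isClique_of_fork hwx huw.symm hux.ne' hl hlw (hSN.S_symm u w ▸ hy)
          (hXwx hl) (hSN.mem_stripVertsAway huv huw hwv hy hyN) hX
      exact hsf (hSN.hasHole_of_triangle huw hwx hux (hSN.subset_inter_of_subset huw hSuw)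
        hSux' hp hlen2)
    · exact hp.1.not_isClique hlen3 (hX.subset fun y hy => hXwx (hp.2.1 y hy))

theorem not_isClique_stripVertsAway_of_triangle (hsf : SquareFree G) {w x : α}
    (huw : J.Adj u w) (hux : J.Adj u x) (hwx : J.Adj w x) (hw : w ∉ ({u, v} : Set α))
    (hx : x ∉ ({u, v} : Set α)) : ¬ G.IsClique (stripVertsAway J S N u v) := by
  by_cases hSux : S u x ⊆ N u
  · exact hSN.not_isClique_stripVertsAway_of_triangle_of_subset huv hsf huw hux hwx hw hx hSux
  by_cases hSuw : S u w ⊆ N u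
  · exact hSN.not_isClique_stripVertsAway_of_triangle_of_subset huv hsf hux huw hwx.symm hx hw
      hSuw
  obtain ⟨z, hz, hzN⟩ := Set.not_subset.mp hSux
  obtain ⟨z', hz', hz'N⟩ := Set.not_subset.mp hSuw
  exact hSN.not_isClique_of_fork hux huw hwx.ne' hz hzN hz'
    (hSN.mem_stripVertsAway huv hux (fun h => hx (Or.inr h)) hz hzN)
    (hSN.mem_stripVertsAway huv huw (fun h => hw (Or.inr h)) hz' hz'N)

theorem adj_of_isClique_stripVertsAway [Fintype α] (hJ : ThreeConnected J)
    (hX : G.IsClique (stripVertsAway J S N u v)) {a b c : α} (hac : J.Adj a c)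
    (ha : a ∉ ({u, v} : Set α)) (hb : b ∉ ({u, v} : Set α)) (hc : c ∉ ({u, v} : Set α))
    (hba : b ≠ a) (hbc : b ≠ c) (hnbc : ¬ J.Adj b c) : J.Adj b u := by
  by_contra hbu
  obtain ⟨y, hby, hya, hyv⟩ := hJ.exists_adj_ne hba fun h => hb (Or.inr h)
  have hy : y ∉ ({u, v} : Set α) := by
    rintro (rfl | rfl)
    exacts [hbu hby, hyv rfl]
  obtain ⟨z, hz⟩ := hSN.nonempty hby
  obtain ⟨z', hz'⟩ := hSN.nonempty hac
  exact hSN.not_isClique_of_far hby hac hba hbc hya (fun h => hnbc (h ▸ hby)) hz hz'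
    (hSN.subset_stripVertsAway huv hby hb hy hz) (hSN.subset_stripVertsAway huv hac ha hc hz') hX

theorem subset_N_of_isClique_stripVertsAway (hX : G.IsClique (stripVertsAway J S N u v))
    {d a e : α} (hud : J.Adj u d) (hae : J.Adj a e) (hdv : d ≠ v) (ha : a ∉ ({u, v} : Set α))
    (he : e ∉ ({u, v} : Set α)) (hda : d ≠ a) (hde : d ≠ e) : S u d ⊆ N u := by
  intro z hz
  by_contra hzN
  obtain ⟨z', hz'⟩ := hSN.nonempty hae
  exact hSN.not_isClique_of_far hud hae (fun h => ha (Or.inl h.symm))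
    (fun h => he (Or.inl h.symm)) hda hde hz hz' (hSN.mem_stripVertsAway huv hud hdv hz hzN)
    (hSN.subset_stripVertsAway huv hae ha he hz') hX

theorem not_isClique_stripVertsAway_of_path [Fintype α] (hsf : SquareFree G)
    (hJ : ThreeConnected J) {a b c : α} (hab : J.Adj a b) (hac : J.Adj a c) (hbc : b ≠ c)
    (ha : a ∉ ({u, v} : Set α)) (hb : b ∉ ({u, v} : Set α)) (hc : c ∉ ({u, v} : Set α)) :
    ¬ G.IsClique (stripVertsAway J S N u v) := by
  intro hX
  have hXab := hSN.subset_stripVertsAway huv hab ha hb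
  have hXac := hSN.subset_stripVertsAway huv hac ha hc
  have hSab := hSN.subset_N_of_isClique hX hab hac hbc hXab hXac
  have hSac := hSN.subset_N_of_isClique hX hac hab hbc.symm hXac hXab
  by_cases hJbc : J.Adj b c
  · have hSbc := hSN.subset_N_of_isClique hX hJbc hab.symm hac.ne'
      (hSN.subset_stripVertsAway huv hJbc hb hc) (hSN.S_symm b a ▸ hXab)
    obtain ⟨R, hR, hpar⟩ := hSN.parity
    have hodd := triangle_sum_mod_two_eq_one (fun e => (R e).length - 1) hpar hab hJbc hac
    simp [hSN.length_eq_one_of_subset hab hR hSab, hSN.length_eq_one_of_subset hJbc hR hSbc,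
      hSN.length_eq_one_of_subset hac hR hSac] at hodd
  have hbu := hSN.adj_of_isClique_stripVertsAway huv hJ hX hac ha hb hc hab.ne' hbc hJbc
  have hcu := hSN.adj_of_isClique_stripVertsAway huv hJ hX hab ha hc hb hac.ne' hbc.symm
    fun h => hJbc h.symm
  have hSub := hSN.subset_N_of_isClique_stripVertsAway huv hX hbu.symm hac
    (fun h => hb (Or.inr h)) ha hc hab.ne' hbc
  have hSuc := hSN.subset_N_of_isClique_stripVertsAway huv hX hcu.symm hab
    (fun h => hc (Or.inr h)) ha hb hac.ne' hbc.symm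
  exact hsf (hSN.hasHole_of_fourCycle hbu.symm hab.symm hac hcu (fun h => ha (Or.inl h.symm)) hbc
    (hSN.subset_inter_of_subset hbu.symm hSub)
    (hSN.subset_inter_symm (hSN.subset_inter_of_subset hab hSab))
    (hSN.subset_inter_of_subset hac hSac)
    (hSN.subset_inter_symm (hSN.subset_inter_of_subset hcu.symm hSuc)))

theorem not_isClique_stripVertsAway [Fintype α] (hsf : SquareFree G) (hJ : ThreeConnected J) :
    ¬ G.IsClique (stripVertsAway J S N u v) := by
  obtain ⟨w, hwu, hwv, -⟩ := hJ.exists_ne u v v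
  have hw : w ∉ ({u, v} : Set α) := by rintro (rfl | rfl) <;> simp_all
  obtain ⟨r, hwr, hru, hrv⟩ := hJ.exists_adj_ne hwu hwv
  have hr : r ∉ ({u, v} : Set α) := by rintro (rfl | rfl) <;> simp_all
  by_cases hpath : ∃ a b c, J.Adj a b ∧ J.Adj a c ∧ b ≠ c ∧ a ∉ ({u, v} : Set α) ∧
      b ∉ ({u, v} : Set α) ∧ c ∉ ({u, v} : Set α)
  · obtain ⟨a, b, c, hab, hac, hbc, ha, hb, hc⟩ := hpath
    exact hSN.not_isClique_stripVertsAway_of_path huv hsf hJ hab hac hbc ha hb hc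
  have hadj : ∀ {a b}, J.Adj a b → a ∉ ({u, v} : Set α) → b ∉ ({u, v} : Set α) → J.Adj u a := by
    intro a b hab ha hb
    obtain ⟨y, hay, hyb, hyv⟩ := hJ.exists_adj_ne hab.ne fun h => ha (Or.inr h)
    by_contra hua
    have hy : y ∉ ({u, v} : Set α) := by
      rintro (rfl | rfl)
      exacts [hua hay.symm, hyv rfl]
    exact hpath ⟨a, b, y, hab, hay, hyb.symm, ha, hb, hy⟩
  exact hSN.not_isClique_stripVertsAway_of_triangle huv hsf (hadj hwr hw hr) (hadj hwr.symm hr hw)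
    hwr hw hr

end IsStripSystem
end StripSystem

theorem stripSystem_triad_general
    {V : Type*} {α : Type*} [Fintype α]
    (G : SimpleGraph V) (hsf : SquareFree G)
    (J : SimpleGraph α) (hJ : ThreeConnected J)
    (S : α → α → Set V) (N : α → Set V) (hSN : IsStripSystem J G S N) :
    ∀ u v, J.Adj u v → ∃ t t' t'' : V, t ∈ S u v ∧
      t' ∈ stripVerts J S \ (S u v ∪ N u ∪ N v) ∧
      t'' ∈ stripVerts J S \ (S u v ∪ N u ∪ N v) ∧
      IsTriad G {t, t', t''} := by
  intro u v huv
  obtain ⟨t, ht⟩ := hSN.nonempty huv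
  obtain ⟨z, hz, z', hz', hzz', hnadj⟩ : ∃ z ∈ stripVertsAway J S N u v,
      ∃ z' ∈ stripVertsAway J S N u v, z ≠ z' ∧ ¬ G.Adj z z' := by
    simpa [SimpleGraph.IsClique, Set.Pairwise] using hSN.not_isClique_stripVertsAway huv hsf hJ
  have hne : ∀ {y}, y ∈ stripVertsAway J S N u v → t ≠ y := fun hy h =>
    hy.2 (Or.inl (Or.inl (h ▸ ht)))
  exact ⟨t, z, z', ht, hz, hz', t, z, z', hne hz, hne hz', hzz',
    hSN.not_adj_of_mem_stripVertsAway huv ht hz, hSN.not_adj_of_mem_stripVertsAway huv ht hz',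
    hnadj, rfl⟩

/-- triads in a strip system. -/
theorem stripSystem_triad
    {V : Type*} {α : Type*} [Fintype α]
    (G : SimpleGraph V) (hsf : SquareFree G) (hberge : IsBerge G)
    (J : SimpleGraph α) (hJ : ThreeConnected J)
    (S : α → α → Set V) (N : α → Set V) (hSN : IsStripSystem J G S N) :
    ∀ u v, J.Adj u v → ∃ t t' t'' : V, t ∈ S u v ∧
      t' ∈ stripVerts J S \ (S u v ∪ N u ∪ N v) ∧
      t'' ∈ stripVerts J S \ (S u v ∪ N u ∪ N v) ∧
      IsTriad G {t, t', t''} :=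
  stripSystem_triad_general G hsf J hJ S N hSN

end Paper
end
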